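/- arXiv:2604.24231 — 6 statements merged into one kernel-verified Lean document; each statement's English description precedes it below -/
import Mathlib

section
/- Let A = (Q, I, P, Δ, C) be a state-based Hanoi omega-automaton and let ρ be an infinite run of A starting in an initial state. Then there exist finite run segments ρ_u and ρ_v with |ρ_u|, |ρ_v| ≤ |Q|² such that ρ_u ρ_v^ω is an infinite run of A starting in an initial state, Occ_{<∞}(C(ρ)) = Occ_{<∞}(C(ρ_u ρ_v^ω)), and Occ_∞(C(ρ)) = Occ_∞(C(ρ_u ρ_v^ω)); consequently, for any acceptance condition determined by the pair (Occ_∞, Occ_{<∞}) of its color sequence (in particular any Emerson–Lei condition), ρ_u ρ_v^ω is accepting whenever ρ is. -/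
/-- Boolean formulas over a set of atomic propositions `P`. -/
inductive BForm (P : Type) : Type
  | tt : BForm P
  | var : P → BForm P
  | not : BForm P → BForm P
  | and : BForm P → BForm P → BForm P
  | or : BForm P → BForm P → BForm P

/-- Satisfaction of a Boolean formula by a valuation `v : P → Bool`. -/
def BForm.sat {P : Type} (v : P → Bool) : BForm P → Bool
  | .tt => true
  | .var p => v p
  | .not φ => !(BForm.sat v φ)
  | .and φ ψ => BForm.sat v φ && BForm.sat v ψ
  | .or φ ψ => BForm.sat v φ || BForm.sat v ψ

/-- A transition of a Hanoi omega-automaton: source, Boolean guard, color, destination. -/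
structure Edge (Q P : Type) (d : ℕ) where
  src : Q
  guard : BForm P
  color : Fin d
  dst : Q

/-- A Hanoi omega-automaton with state set `Q`, atomic propositions `P` and index `d`:
an initial-state set and a set of guarded colored transitions. -/
structure HOA (Q P : Type) (d : ℕ) where
  I : Set Q
  Δ : Set (Edge Q P d)

/-- An infinite run: consecutive transitions of the automaton. -/
def IsRun {Q P : Type} {d : ℕ} (A : HOA Q P d) (ρ : ℕ → Edge Q P d) : Prop :=
  (∀ n, ρ n ∈ A.Δ) ∧ ∀ n, (ρ n).dst = (ρ (n + 1)).src

/-- `w ⊨ ρ` : every letter of the word satisfies the corresponding guard. -/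
def WordSat {Q P : Type} {d : ℕ} (w : ℕ → P → Bool) (ρ : ℕ → Edge Q P d) : Prop :=
  ∀ n, ((ρ n).guard).sat (w n) = true

/-- The color sequence of a run. -/
def colorSeq {Q P : Type} {d : ℕ} (ρ : ℕ → Edge Q P d) : ℕ → Fin d :=
  fun n => (ρ n).color

/-- The language of a Hanoi omega-automaton for acceptance condition `Acc ⊆ [d]^ω`. -/
def Lang {Q P : Type} {d : ℕ} (A : HOA Q P d) (Acc : Set (ℕ → Fin d)) :
    Set (ℕ → P → Bool) :=
  {w | ∃ ρ, IsRun A ρ ∧ (ρ 0).src ∈ A.I ∧ colorSeq ρ ∈ Acc ∧ WordSat w ρ}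

/-- State-based coloring: all transitions leaving the same state have the same color. -/
def StateBased {Q P : Type} {d : ℕ} (A : HOA Q P d) : Prop :=
  ∀ t ∈ A.Δ, ∀ t' ∈ A.Δ, t.src = t'.src → t.color = t'.color

/-- Symbols occurring infinitely often in an infinite sequence. -/
def OccInf {C : Type} (s : ℕ → C) : Set C := {c | ∀ N, ∃ n, N ≤ n ∧ s n = c}

/-- Symbols occurring, but only finitely often, in an infinite sequence. -/
def OccFin {C : Type} (s : ℕ → C) : Set C := Set.range s \ OccInf s

/-- The ultimately periodic sequence `u · v^ω`. -/
def lassoSeq {α : Type} (u v : List α) (hv : v ≠ []) : ℕ → α := fun n =>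
  if h : n < u.length then u[n]'h
  else v[(n - u.length) % v.length]'(Nat.mod_lt _ (List.length_pos_iff.mpr hv))

namespace Lasso
variable {Q P : Type} {d : ℕ}

/-- destination of the last edge, or `a` if there is none -/
def lastDst (a : Q) (l : List (Edge Q P d)) : Q :=
  match l.getLast? with
  | none => a
  | some e => e.dst

@[simp] lemma lastDst_nil (a : Q) : lastDst a ([] : List (Edge Q P d)) = a := rfl

lemma lastDst_cons (a : Q) (e : Edge Q P d) (t : List (Edge Q P d)) :
    lastDst a (e :: t) = lastDst e.dst t := by
  cases t with
  | nil => rfl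
  | cons f t' =>
    simp only [lastDst, List.getLast?_cons_cons]
    cases h : (f :: t').getLast? with
    | none => simp at h
    | some g => rfl

/-- A finite run segment from `a` to `b`. -/
def Seg (a b : Q) (l : List (Edge Q P d)) : Prop :=
  l.Chain' (fun e e' => e.dst = e'.src) ∧ (∀ e ∈ l.head?, e.src = a) ∧ lastDst a l = b

lemma seg_nil (a : Q) : Seg a a ([] : List (Edge Q P d)) := by
  refine ⟨List.isChain_nil, by simp, rfl⟩

lemma seg_single {a b : Q} (e : Edge Q P d) (h1 : e.src = a) (h2 : e.dst = b) :
    Seg a b [e] := by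
  refine ⟨List.isChain_singleton e, by simpa, by simpa [lastDst]⟩

lemma seg_cons_iff {a b : Q} (e : Edge Q P d) (t : List (Edge Q P d)) :
    Seg a b (e :: t) ↔ e.src = a ∧ Seg e.dst b t := by
  constructor
  · rintro ⟨hc, hh, hl⟩
    rw [List.Chain', List.isChain_cons] at hc
    refine ⟨hh e rfl, hc.2, fun e' he' => (hc.1 e' he').symm, by
      rw [lastDst_cons] at hl; exact hl⟩
  · rintro ⟨hsrc, hc, hh, hl⟩
    refine ⟨List.isChain_cons.2 ⟨fun e' he' => (hh e' he').symm, hc⟩,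
      by simpa, by rw [lastDst_cons]; exact hl⟩

lemma seg_append {a b c : Q} {l l' : List (Edge Q P d)}
    (h : Seg a b l) (h' : Seg b c l') : Seg a c (l ++ l') := by
  induction l generalizing a with
  | nil => rcases h with ⟨-, -, hl⟩; simp at hl; subst hl; simpa using h'
  | cons e t ih =>
    rw [seg_cons_iff] at h
    rw [List.cons_append, seg_cons_iff]
    exact ⟨h.1, ih h.2⟩


lemma seg_src_mem_of_ne_nil {a b : Q} {l : List (Edge Q P d)}
    (h : Seg a b l) (hne : l ≠ []) : a ∈ l.map Edge.src := by
  cases l with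
  | nil => exact absurd rfl hne
  | cons e t =>
    rw [seg_cons_iff] at h
    simp [← h.1]

lemma seg_eq_of_nil {a b : Q} (h : Seg a b ([] : List (Edge Q P d))) : a = b := by
  simpa [lastDst] using h.2.2

/-- Shorten a segment to one with no repeated source states. -/
lemma seg_dedup (Pred : Edge Q P d → Prop) :
    ∀ l : List (Edge Q P d), ∀ a b, Seg a b l → (∀ e ∈ l, Pred e) →
    ∃ l' : List (Edge Q P d), Seg a b l' ∧ (∀ e ∈ l', Pred e) ∧
      (l'.map Edge.src).Nodup ∧ (∀ e ∈ l', e ∈ l) := by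
  intro l
  induction l with
  | nil => intro a b h _; exact ⟨[], h, by simp, by simp, by simp⟩
  | cons e t ih =>
    intro a b h hP
    rw [seg_cons_iff] at h
    obtain ⟨t', ht', hPt', hnd, hsub⟩ :=
      ih e.dst b h.2 (fun e' he' => hP e' (List.mem_cons_of_mem _ he'))
    by_cases hmem : e.src ∈ t'.map Edge.src
    · -- cut: take the suffix of t' starting at an edge with the same source
      rw [List.mem_map] at hmem
      obtain ⟨e₂, he₂, hsrc⟩ := hmem
      obtain ⟨t₁, t₂, rfl⟩ := List.append_of_mem he₂
      have hsuf : (e₂ :: t₂) <:+ (t₁ ++ e₂ :: t₂) := List.suffix_append _ _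
      have hgl : (t₁ ++ e₂ :: t₂).getLast? = (e₂ :: t₂).getLast? := by
        rw [List.getLast?_append]
        cases h2 : (e₂ :: t₂).getLast? with
        | none => simp at h2
        | some g => rfl
      refine ⟨e₂ :: t₂, ⟨ht'.1.suffix hsuf, ?_, ?_⟩, ?_, ?_, ?_⟩
      · intro e' he'
        simp only [List.head?_cons, Option.mem_some_iff] at he'
        subst he'
        exact hsrc.trans h.1
      · have hv := ht'.2.2
        simp only [lastDst, hgl] at hv ⊢
        cases h2 : (e₂ :: t₂).getLast? with
        | none => simp at h2
        | some g => rw [h2] at hv; exact hv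
      · exact fun e' he' => hPt' e' (hsuf.subset he')
      · exact hnd.sublist ((hsuf.sublist).map Edge.src)
      · exact fun e' he' => List.mem_cons_of_mem _ (hsub e' (hsuf.subset he'))
    · refine ⟨e :: t', ?_, ?_, ?_, ?_⟩
      · rw [seg_cons_iff]; exact ⟨h.1, ht'⟩
      · intro e' he'
        rcases List.mem_cons.1 he' with rfl | he'
        · exact hP e' (List.mem_cons_self)
        · exact hPt' e' he'
      · rw [List.map_cons, List.nodup_cons]; exact ⟨hmem, hnd⟩
      · intro e' he'
        rcases List.mem_cons.1 he' with rfl | he'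
        · exact List.mem_cons_self
        · exact List.mem_cons_of_mem _ (hsub e' he')


/-- The literal window of a run: edges `σ a, σ (a+1), …, σ (a+n-1)`. -/
def window (σ : ℕ → Edge Q P d) (a n : ℕ) : List (Edge Q P d) :=
  (List.range n).map (fun i => σ (a + i))

@[simp] lemma window_zero (σ : ℕ → Edge Q P d) (a : ℕ) : window σ a 0 = [] := rfl

lemma window_succ (σ : ℕ → Edge Q P d) (a n : ℕ) :
    window σ a (n + 1) = window σ a n ++ [σ (a + n)] := by
  simp [window, List.range_succ]

lemma mem_window {σ : ℕ → Edge Q P d} {a n : ℕ} {e : Edge Q P d} :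
    e ∈ window σ a n ↔ ∃ i < n, e = σ (a + i) := by
  simp [window, eq_comm]

lemma seg_window (σ : ℕ → Edge Q P d) (hσ : ∀ n, (σ n).dst = (σ (n + 1)).src)
    (a n : ℕ) : Seg (σ a).src (σ (a + n)).src (window σ a n) := by
  induction n with
  | zero => simpa using seg_nil (σ a).src
  | succ n ih =>
    rw [window_succ, show a + (n+1) = (a+n) + 1 from rfl]
    exact seg_append ih (seg_single _ rfl (hσ (a+n)))

open Classical in
/-- set of source states in a window -/
noncomputable def srcFin (σ : ℕ → Edge Q P d) (a n : ℕ) : Finset Q :=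
  (Finset.range n).image (fun i => (σ (a + i)).src)

lemma mem_srcFin {σ : ℕ → Edge Q P d} {a n : ℕ} {x : Q} :
    x ∈ srcFin σ a n ↔ ∃ i < n, (σ (a + i)).src = x := by
  classical
  simp [srcFin]

/-- Core covering lemma: a short segment from `σ a` to `σ (a+n)` that (together with its
endpoint) covers all source states of the window, built from edges of the window. -/
lemma cover (σ : ℕ → Edge Q P d) (hσ : ∀ n, (σ n).dst = (σ (n + 1)).src) :
    ∀ n a, ∃ l : List (Edge Q P d),
      Seg (σ a).src (σ (a + n)).src l ∧
      (∀ e ∈ l, ∃ i < n, e = σ (a + i)) ∧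
      (∀ i < n, (σ (a + i)).src ∈ l.map Edge.src ∨ (σ (a + i)).src = (σ (a + n)).src) ∧
      l.length ≤ (srcFin σ a n).card ^ 2 := by
  intro n
  induction n using Nat.strong_induction_on with
  | _ n ih =>
  intro a
  classical
  rcases Nat.eq_zero_or_pos n with rfl | hn
  · exact ⟨[], by simpa using seg_nil (σ (a+0)).src, by simp, by simp, by simp⟩
  -- first-occurrence indices
  set T : Finset ℕ := (Finset.range n).filter
    (fun i => ∀ j < i, (σ (a + j)).src ≠ (σ (a + i)).src) with hT
  have h0T : (0 : ℕ) ∈ T := by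
    simp [hT, Finset.mem_filter, hn]
  have hTne : T.Nonempty := ⟨0, h0T⟩
  set c := T.max' hTne with hc
  have hcT : c ∈ T := T.max'_mem hTne
  have hcn : c < n := (Finset.mem_filter.1 hcT).1 |> Finset.mem_range.1
  have hcfo : ∀ j < c, (σ (a + j)).src ≠ (σ (a + c)).src := (Finset.mem_filter.1 hcT).2
  -- every state of the window occurs in [a, a+c]
  have hcover : ∀ i < n, ∃ j ≤ c, (σ (a + j)).src = (σ (a + i)).src := by
    intro i hi
    have hex : ∃ j, (σ (a + j)).src = (σ (a + i)).src ∧ j ≤ i := ⟨i, rfl, le_refl i⟩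
    set j₀ := Nat.find hex with hj₀
    obtain ⟨hj₀eq, hj₀le⟩ := Nat.find_spec hex
    have hj₀T : j₀ ∈ T := by
      refine Finset.mem_filter.2 ⟨Finset.mem_range.2 (lt_of_le_of_lt hj₀le hi), ?_⟩
      intro j hj hcontra
      exact (Nat.find_min hex hj) ⟨hcontra.trans hj₀eq, le_trans (le_of_lt hj) (le_trans hj₀le (le_refl i))⟩
    exact ⟨j₀, T.le_max' _ hj₀T, hj₀eq⟩
  -- cardinality bookkeeping
  have hknz : (srcFin σ a n).Nonempty := ⟨(σ (a + 0)).src, mem_srcFin.2 ⟨0, hn, rfl⟩⟩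
  set k := (srcFin σ a n).card with hk
  have hsubc : srcFin σ a c ⊆ srcFin σ a n := by
    intro x hx
    rw [mem_srcFin] at hx ⊢
    obtain ⟨i, hi, h⟩ := hx
    exact ⟨i, lt_trans hi hcn, h⟩
  have hnotmem : (σ (a + c)).src ∉ srcFin σ a c := by
    rw [mem_srcFin]; rintro ⟨j, hj, hje⟩; exact hcfo j hj hje
  have hins : srcFin σ a n = insert ((σ (a + c)).src) (srcFin σ a c) := by
    apply Finset.Subset.antisymm
    · intro x hx
      rw [mem_srcFin] at hx
      obtain ⟨i, hi, rfl⟩ := hx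
      obtain ⟨j, hj, hje⟩ := hcover i hi
      rcases Nat.lt_or_ge j c with hjc | hjc
      · exact Finset.mem_insert_of_mem (mem_srcFin.2 ⟨j, hjc, hje⟩)
      · have : j = c := le_antisymm hj hjc
        subst this
        rw [← hje]
        exact Finset.mem_insert_self _ _
    · intro x hx
      rcases Finset.mem_insert.1 hx with rfl | hx
      · exact mem_srcFin.2 ⟨c, hcn, rfl⟩
      · exact hsubc hx
  have hcardc : (srcFin σ a c).card = k - 1 := by
    rw [hk, hins, Finset.card_insert_of_notMem hnotmem]
    omega
  -- first part: IH on the window up to c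
  obtain ⟨l₁, hl₁seg, hl₁mem, hl₁cov, hl₁len⟩ := ih c hcn a
  -- second part: dedup of the window from c to n
  have hwseg : Seg (σ (a + c)).src (σ (a + n)).src (window σ (a + c) (n - c)) := by
    have := seg_window σ hσ (a + c) (n - c)
    rwa [show a + c + (n - c) = a + n by omega] at this
  obtain ⟨l₂, hl₂seg, hl₂P, hl₂nd, hl₂sub⟩ := seg_dedup
    (fun e => ∃ i < n, e = σ (a + i)) (window σ (a+c) (n - c)) _ _ hwseg
    (by
      intro e he
      rw [mem_window] at he
      obtain ⟨i, hi, rfl⟩ := he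
      exact ⟨c + i, by omega, by rw [Nat.add_assoc]⟩)
  have hl₂len : l₂.length ≤ k := by
    have h1 : (l₂.map Edge.src).length = l₂.length := List.length_map _
    have h2 : ∀ x ∈ l₂.map Edge.src, x ∈ srcFin σ a n := by
      intro x hx
      rw [List.mem_map] at hx
      obtain ⟨e, he, rfl⟩ := hx
      obtain ⟨i, hi, rfl⟩ := hl₂P e he
      exact mem_srcFin.2 ⟨i, hi, rfl⟩
    calc l₂.length = (l₂.map Edge.src).length := h1.symm
      _ = (l₂.map Edge.src).toFinset.card := (List.toFinset_card_of_nodup hl₂nd).symm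
      _ ≤ k := Finset.card_le_card (fun x hx => h2 x (List.mem_toFinset.1 hx))
  refine ⟨l₁ ++ l₂, seg_append hl₁seg hl₂seg, ?_, ?_, ?_⟩
  · intro e he
    rcases List.mem_append.1 he with he | he
    · obtain ⟨i, hi, rfl⟩ := hl₁mem e he
      exact ⟨i, by omega, rfl⟩
    · exact hl₂P e he
  · -- coverage
    have hcend : (σ (a + c)).src ∈ l₂.map Edge.src ∨ (σ (a + c)).src = (σ (a + n)).src := by
      rcases eq_or_ne l₂ [] with rfl | hne
      · exact Or.inr (seg_eq_of_nil hl₂seg)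
      · exact Or.inl (seg_src_mem_of_ne_nil hl₂seg hne)
    intro i hi
    rcases Nat.lt_or_ge i c with hic | hic
    · rcases hl₁cov i hic with hmem | heq
      · exact Or.inl (by rw [List.map_append]; exact List.mem_append_left _ hmem)
      · rw [heq]
        rcases hcend with hm | he
        · exact Or.inl (by rw [List.map_append]; exact List.mem_append_right _ hm)
        · exact Or.inr he
    · obtain ⟨j, hj, hje⟩ := hcover i hi
      rw [← hje]
      rcases Nat.lt_or_ge j c with hjc | hjc
      · rcases hl₁cov j hjc with hmem | heq
        · exact Or.inl (by rw [List.map_append]; exact List.mem_append_left _ hmem)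
        · rw [heq]
          rcases hcend with hm | he
          · exact Or.inl (by rw [List.map_append]; exact List.mem_append_right _ hm)
          · exact Or.inr he
      · have : j = c := le_antisymm hj hjc
        subst this
        rcases hcend with hm | he
        · exact Or.inl (by rw [List.map_append]; exact List.mem_append_right _ hm)
        · exact Or.inr he
  · rw [List.length_append]
    have h1 : l₁.length ≤ (k - 1) ^ 2 := by rwa [hcardc] at hl₁len
    obtain ⟨k', hk'⟩ : ∃ k', k = k' + 1 := ⟨k - 1, by
      have := Finset.card_pos.2 hknz; omega⟩
    have : (k - 1) = k' := by omega
    rw [this] at h1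
    rw [hk']
    nlinarith [hl₂len, h1, hk'.symm]


lemma seg_chain_step {a b : Q} {l : List (Edge Q P d)} (h : Seg a b l)
    {i : ℕ} (hi : i + 1 < l.length) :
    (l[i]'(by omega)).dst = (l[i+1]'hi).src := by
  have := List.isChain_iff_getElem.1 h.1 i (by omega)
  simpa [List.get_eq_getElem] using this

lemma seg_getElem_src {a b : Q} {l : List (Edge Q P d)} (h : Seg a b l)
    (hne : l ≠ []) : (l[0]'(List.length_pos_iff.2 hne)).src = a := by
  cases l with
  | nil => exact absurd rfl hne
  | cons e t => exact (seg_cons_iff _ _).1 h |>.1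

lemma seg_getElem_dst {a b : Q} {l : List (Edge Q P d)} (h : Seg a b l)
    (hne : l ≠ []) : (l[l.length - 1]'(by have := List.length_pos_iff.2 hne; omega)).dst = b := by
  have hl := h.2.2
  have hgl : l.getLast? = some (l[l.length - 1]'(by have := List.length_pos_iff.2 hne; omega)) := by
    rw [List.getLast?_eq_getLast hne, List.getLast_eq_getElem]
  simp only [lastDst, hgl] at hl
  exact hl

lemma cycle_step {q : Q} {l : List (Edge Q P d)} (h : Seg q q l) (hne : l ≠ [])
    {i : ℕ} (hi : i < l.length) :
    (l[i]'hi).dst = (l[(i+1) % l.length]'(Nat.mod_lt _ (List.length_pos_iff.2 hne))).src := by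
  rcases Nat.lt_or_ge (i+1) l.length with h1 | h1
  · simp only [Nat.mod_eq_of_lt h1]
    exact seg_chain_step h h1
  · have hi1 : i + 1 = l.length := by omega
    have h0 : (i+1) % l.length = 0 := by rw [hi1]; exact Nat.mod_self _
    simp only [h0]
    have hd := seg_getElem_dst h hne
    have hs := seg_getElem_src h hne
    rw [hs]
    have : i = l.length - 1 := by omega
    subst this
    exact hd


variable {α : Type}

lemma lassoSeq_lt {u v : List α} {hv : v ≠ []} {n : ℕ} (h : n < u.length) :
    lassoSeq u v hv n = u[n]'h := dif_pos h

lemma lassoSeq_ge {u v : List α} {hv : v ≠ []} {n : ℕ} (h : ¬ n < u.length) :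
    lassoSeq u v hv n = v[(n - u.length) % v.length]'(Nat.mod_lt _ (List.length_pos_iff.mpr hv)) :=
  dif_neg h

end Lasso


/-- small lasso property for state-based HOA, preserving the sets of
finitely and infinitely occurring colors; consequently the lasso run is accepting for
any acceptance condition determined by `(Occ_∞, Occ_{<∞})`. -/
theorem stmt1 {Q P : Type} [Fintype Q] {d : ℕ}
    (A : HOA Q P d) (hsb : StateBased A)
    (ρ : ℕ → Edge Q P d) (hrun : IsRun A ρ) (hinit : (ρ 0).src ∈ A.I) :
    ∃ (u v : List (Edge Q P d)) (hv : v ≠ []),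
      u.length ≤ Fintype.card Q ^ 2 ∧ v.length ≤ Fintype.card Q ^ 2 ∧
      IsRun A (lassoSeq u v hv) ∧ ((lassoSeq u v hv) 0).src ∈ A.I ∧
      OccFin (colorSeq ρ) = OccFin (colorSeq (lassoSeq u v hv)) ∧
      OccInf (colorSeq ρ) = OccInf (colorSeq (lassoSeq u v hv)) ∧
      ∀ Acc : Set (ℕ → Fin d),
        (∀ s t : ℕ → Fin d,
          OccInf s = OccInf t → OccFin s = OccFin t → (s ∈ Acc ↔ t ∈ Acc)) →
        colorSeq ρ ∈ Acc → colorSeq (lassoSeq u v hv) ∈ Acc := by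
  classical
  obtain ⟨hΔ, hcons⟩ := hrun
  open Lasso in
  -- the set of states occurring infinitely often as a source
  set Sinf : Set Q := {x | ∀ N, ∃ n, N ≤ n ∧ (ρ n).src = x} with hSinf
  -- beyond N₀ all sources are in Sinf
  have hgex : ∀ x : Q, ∃ N, x ∉ Sinf → ∀ n, N ≤ n → (ρ n).src ≠ x := by
    intro x
    by_cases hx : x ∈ Sinf
    · exact ⟨0, fun h => absurd hx h⟩
    · simp only [hSinf, Set.mem_setOf_eq, not_forall] at hx
      obtain ⟨N, hN⟩ := hx
      push_neg at hN
      exact ⟨N, fun _ n hn => hN n hn⟩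
  choose g hg using hgex
  set N₀ := Finset.univ.sup g with hN₀def
  have hN₀ : ∀ n, N₀ ≤ n → (ρ n).src ∈ Sinf := by
    intro n hn
    by_contra hx
    exact hg _ hx n (le_trans (Finset.le_sup (Finset.mem_univ _)) hn) rfl
  -- every state ever occurring occurs before T₀
  have hfex : ∀ x : Q, ∃ T, (∃ m, (ρ m).src = x) → ∃ j, j < T ∧ (ρ j).src = x := by
    intro x
    by_cases hx : ∃ m, (ρ m).src = x
    · obtain ⟨m, hm⟩ := hx; exact ⟨m + 1, fun _ => ⟨m, Nat.lt_succ_self m, hm⟩⟩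
    · exact ⟨0, fun h => absurd h hx⟩
  choose f hf using hfex
  set T₀ := max N₀ (Finset.univ.sup f) with hT₀def
  have hT₀all : ∀ m, ∃ j, j < T₀ ∧ (ρ j).src = (ρ m).src := by
    intro m
    obtain ⟨j, hj, hje⟩ := hf ((ρ m).src) ⟨m, rfl⟩
    exact ⟨j, lt_of_lt_of_le hj (le_trans (Finset.le_sup (Finset.mem_univ _))
      (le_max_right _ _)), hje⟩
  have hT₀N₀ : N₀ ≤ T₀ := le_max_left _ _
  set q := (ρ T₀).src with hqdef
  have hqinf : q ∈ Sinf := hN₀ T₀ hT₀N₀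
  -- witnesses for Sinf states after T₀
  have htex : ∀ x : Q, ∃ t, x ∈ Sinf → (T₀ ≤ t ∧ (ρ t).src = x) := by
    intro x
    by_cases hx : x ∈ Sinf
    · obtain ⟨n, hn1, hn2⟩ := hx T₀; exact ⟨n, fun _ => ⟨hn1, hn2⟩⟩
    · exact ⟨0, fun h => absurd h hx⟩
  choose t ht using htex
  obtain ⟨T₁, hT₁M, hT₁q⟩ := hqinf (max (Finset.univ.sup t + 1) (T₀ + 1))
  have hT₀T₁ : T₀ < T₁ :=
    lt_of_lt_of_le (lt_of_lt_of_le (Nat.lt_succ_self T₀) (le_max_right _ _)) hT₁M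
  have hSinfwin : ∀ x ∈ Sinf, ∃ i < T₁ - T₀, (ρ (T₀ + i)).src = x := by
    intro x hx
    obtain ⟨ht1, ht2⟩ := ht x hx
    refine ⟨t x - T₀, by
      have : t x < T₁ := lt_of_lt_of_le (lt_of_lt_of_le (Nat.lt_succ_self _)
        (le_trans (Nat.succ_le_succ (Finset.le_sup (Finset.mem_univ _)))
          (le_max_left _ _))) hT₁M
      omega, by rw [show T₀ + (t x - T₀) = t x by omega]; exact ht2⟩
  -- the prefix u via the covering lemma
  obtain ⟨u, huseg0, humem0, hucov0, hulen0⟩ := cover ρ hcons T₀ 0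
  have huseg : Seg (ρ 0).src q u := by
    rwa [show (0 : ℕ) + T₀ = T₀ by omega] at huseg0
  have humem : ∀ e ∈ u, ∃ i, e = ρ i := by
    intro e he; obtain ⟨i, _, hi⟩ := humem0 e he; exact ⟨0 + i, hi⟩
  have hucov : ∀ m, (ρ m).src ∈ u.map Edge.src ∨ (ρ m).src = q := by
    intro m
    obtain ⟨j, hj, hje⟩ := hT₀all m
    have := hucov0 j hj
    rw [show (0 : ℕ) + j = j from by omega, show (0 : ℕ) + T₀ = T₀ from by omega] at this
    rwa [hje] at this
  have hcardQ : ∀ a n, (srcFin ρ a n).card ≤ Fintype.card Q := fun a n => Finset.card_le_univ _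
  have hQpos : 1 ≤ Fintype.card Q := Fintype.card_pos_iff.2 ⟨(ρ 0).src⟩
  have hulen : u.length ≤ Fintype.card Q ^ 2 :=
    le_trans hulen0 (Nat.pow_le_pow_left (hcardQ 0 T₀) 2)
  -- the cycle v via the covering lemma (plus a patch in the degenerate case)
  obtain ⟨l₂, hl₂seg0, hl₂mem0, hl₂cov0, hl₂len0⟩ := cover ρ hcons (T₁ - T₀) T₀
  have hTT : T₀ + (T₁ - T₀) = T₁ := by omega
  have hl₂seg : Seg q q l₂ := by
    have := hl₂seg0; rw [hTT] at this; rwa [hT₁q] at this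
  have hl₂mem : ∀ e ∈ l₂, ∃ i, T₀ ≤ i ∧ i < T₁ ∧ e = ρ i := by
    intro e he
    obtain ⟨i, hi, rfl⟩ := hl₂mem0 e he
    exact ⟨T₀ + i, by omega, by omega, rfl⟩
  have hl₂cov : ∀ x ∈ Sinf, x ∈ l₂.map Edge.src ∨ x = q := by
    intro x hx
    obtain ⟨i, hi, hie⟩ := hSinfwin x hx
    have := hl₂cov0 i hi
    rw [hTT, hT₁q, hie] at this
    exact this
  -- assemble v
  have hvpack : ∃ v : List (Edge Q P d), v ≠ [] ∧ Seg q q v ∧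
      (∀ e ∈ v, ∃ i, T₀ ≤ i ∧ i < T₁ ∧ e = ρ i) ∧
      (∀ x ∈ Sinf, x ∈ v.map Edge.src) ∧ v.length ≤ Fintype.card Q ^ 2 := by
    rcases eq_or_ne l₂ [] with rfl | hne
    · -- degenerate: use a single self-loop at q
      have hdst : (ρ T₀).dst = q := by
        rw [hcons T₀]
        rcases Nat.lt_or_ge (T₀ + 1) T₁ with h1 | h1
        · have := hl₂cov0 1 (by omega)
          rw [hTT, hT₁q] at this
          rcases this with h | h
          · simp at h
          · exact h
        · have : T₀ + 1 = T₁ := by omega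
          rw [this, hT₁q]
      refine ⟨[ρ T₀], by simp, seg_single _ rfl hdst, ?_, ?_, ?_⟩
      · intro e he
        simp only [List.mem_singleton] at he
        exact ⟨T₀, le_refl _, hT₀T₁, he⟩
      · intro x hx
        rcases hl₂cov x hx with h | rfl
        · simp at h
        · simp [hqdef]
      · simpa using Nat.one_le_iff_ne_zero.2 (by positivity)
    · refine ⟨l₂, hne, hl₂seg, hl₂mem, ?_, ?_⟩
      · intro x hx
        rcases hl₂cov x hx with h | rfl
        · exact h
        · exact seg_src_mem_of_ne_nil hl₂seg hne
      · exact le_trans hl₂len0 (Nat.pow_le_pow_left (hcardQ T₀ (T₁ - T₀)) 2)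
  obtain ⟨v, hv, hvseg, hvmem, hvcov, hvlen⟩ := hvpack
  have hLpos : 0 < v.length := List.length_pos_iff.2 hv
  -- every edge of u or v is an edge of the run, hence in Δ
  have hedge : ∀ e : Edge Q P d, (e ∈ u ∨ e ∈ v) → ∃ i, e = ρ i := by
    rintro e (he | he)
    · exact humem e he
    · obtain ⟨i, _, _, hi⟩ := hvmem e he; exact ⟨i, hi⟩
  have hedgeΔ : ∀ e : Edge Q P d, (e ∈ u ∨ e ∈ v) → e ∈ A.Δ := by
    intro e he; obtain ⟨i, rfl⟩ := hedge e he; exact hΔ i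
  -- basic facts about the lasso sequence
  have hlassomem : ∀ n, lassoSeq u v hv n ∈ u ∨ lassoSeq u v hv n ∈ v := by
    intro n
    by_cases h : n < u.length
    · rw [lassoSeq_lt h]; exact Or.inl (List.getElem_mem _)
    · rw [lassoSeq_ge h]; exact Or.inr (List.getElem_mem _)
  -- the lasso is a run
  have hlassorun : IsRun A (lassoSeq u v hv) := by
    constructor
    · intro n; exact hedgeΔ _ (hlassomem n)
    · intro n
      by_cases h1 : n + 1 < u.length
      · rw [lassoSeq_lt (by omega : n < u.length), lassoSeq_lt h1]
        exact seg_chain_step huseg h1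
      · by_cases h2 : n < u.length
        · -- n + 1 = u.length
          have hueq : n + 1 = u.length := by omega
          have hune : u ≠ [] := by
            intro h; rw [h] at hueq; simp at hueq
          rw [lassoSeq_lt h2, lassoSeq_ge h1]
          have h3 : (n + 1 - u.length) % v.length = 0 := by
            rw [hueq]; simp
          simp only [h3]
          rw [seg_getElem_src hvseg hv]
          have hd := seg_getElem_dst huseg hune
          have hn1 : u.length - 1 = n := by omega
          simp only [hn1] at hd
          rw [hd]
        · -- n ≥ u.length
          rw [lassoSeq_ge h2, lassoSeq_ge h1]
          set m := n - u.length with hm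
          have hmn : n + 1 - u.length = m + 1 := by omega
          have hmod : (m + 1) % v.length = (m % v.length + 1) % v.length := by
            conv_lhs => rw [show m = m % v.length + v.length * (m / v.length) from
              (Nat.mod_add_div m v.length).symm]
            rw [show m % v.length + v.length * (m / v.length) + 1
                = m % v.length + 1 + v.length * (m / v.length) by ring]
            rw [Nat.add_mul_mod_self_left]
          simp only [hmn, hmod]
          exact cycle_step hvseg hv (Nat.mod_lt _ hLpos)
  -- initial state
  have hlassoinit : ((lassoSeq u v hv) 0).src ∈ A.I := by
    by_cases h : 0 < u.length
    · rw [lassoSeq_lt h, seg_getElem_src huseg (by intro hh; rw [hh] at h; simp at h)]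
      exact hinit
    · have hue : u = [] := by
        cases u with
        | nil => rfl
        | cons a l => simp at h
      have h0q : (ρ 0).src = q := by
        rw [hue] at huseg; exact seg_eq_of_nil huseg
      rw [lassoSeq_ge (by omega)]
      simp only [hue, List.length_nil, Nat.sub_zero, Nat.zero_mod]
      rw [seg_getElem_src hvseg hv, ← h0q]
      exact hinit
  -- color index computations for the lasso
  have hlassov : ∀ (i : ℕ) (hi : i < v.length) (m : ℕ),
      lassoSeq u v hv (u.length + i + m * v.length) = v[i]'hi := by
    intro i hi m
    rw [lassoSeq_ge (by omega)]
    have : u.length + i + m * v.length - u.length = i + m * v.length := by omega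
    simp only [this, Nat.add_mul_mod_self_right, Nat.mod_eq_of_lt hi]
  -- the four color-set identities
  set CV : Set (Fin d) := {c | ∃ e ∈ v, e.color = c} with hCV
  set CUV : Set (Fin d) := {c | ∃ e, (e ∈ u ∨ e ∈ v) ∧ e.color = c} with hCUV
  have h1 : OccInf (colorSeq (lassoSeq u v hv)) = CV := by
    apply Set.Subset.antisymm
    · intro c hc
      obtain ⟨n, hn, hcol⟩ := hc u.length
      rw [colorSeq, lassoSeq_ge (by omega)] at hcol
      exact ⟨_, List.getElem_mem _, hcol⟩
    · rintro c ⟨e, he, rfl⟩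
      obtain ⟨i, hi, rfl⟩ := List.mem_iff_getElem.1 he
      intro N
      refine ⟨u.length + i + N * v.length, by nlinarith, ?_⟩
      rw [colorSeq, hlassov i hi N]
  have h2 : OccInf (colorSeq ρ) = CV := by
    apply Set.Subset.antisymm
    · intro c hc
      obtain ⟨n, hn, hcol⟩ := hc T₀
      have hsrc : (ρ n).src ∈ Sinf := hN₀ n (le_trans hT₀N₀ hn)
      obtain ⟨e, he, hesrc⟩ := List.mem_map.1 (hvcov _ hsrc)
      refine ⟨e, he, ?_⟩
      rw [hsb e (hedgeΔ e (Or.inr he)) (ρ n) (hΔ n) hesrc]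
      exact hcol
    · rintro c ⟨e, he, rfl⟩
      obtain ⟨i, hi1, hi2, rfl⟩ := hvmem e he
      have hsrc : (ρ i).src ∈ Sinf := hN₀ i (le_trans hT₀N₀ hi1)
      intro N
      obtain ⟨n, hn, hsrcn⟩ := hsrc N
      exact ⟨n, hn, hsb (ρ n) (hΔ n) (ρ i) (hΔ i) hsrcn⟩
  have h3 : Set.range (colorSeq (lassoSeq u v hv)) = CUV := by
    apply Set.Subset.antisymm
    · rintro c ⟨n, rfl⟩
      exact ⟨_, hlassomem n, rfl⟩
    · rintro c ⟨e, he, rfl⟩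
      rcases he with he | he
      · obtain ⟨i, hi, rfl⟩ := List.mem_iff_getElem.1 he
        exact ⟨i, by rw [colorSeq, lassoSeq_lt hi]⟩
      · obtain ⟨i, hi, rfl⟩ := List.mem_iff_getElem.1 he
        refine ⟨u.length + i, ?_⟩
        have := hlassov i hi 0
        rw [Nat.zero_mul, Nat.add_zero] at this
        rw [colorSeq, this]
  have h4 : Set.range (colorSeq ρ) = CUV := by
    apply Set.Subset.antisymm
    · rintro c ⟨n, rfl⟩
      rcases hucov n with hm | he
      · obtain ⟨e, he, hesrc⟩ := List.mem_map.1 hm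
        exact ⟨e, Or.inl he, hsb e (hedgeΔ e (Or.inl he)) (ρ n) (hΔ n) hesrc⟩
      · obtain ⟨e, hev, hesrc⟩ := List.mem_map.1 (seg_src_mem_of_ne_nil hvseg hv)
        refine ⟨e, Or.inr hev, ?_⟩
        apply hsb e (hedgeΔ e (Or.inr hev)) (ρ n) (hΔ n)
        rw [hesrc, ← he]
    · rintro c ⟨e, he, rfl⟩
      obtain ⟨i, rfl⟩ := hedge e he
      exact ⟨i, rfl⟩
  refine ⟨u, v, hv, hulen, hvlen, hlassorun, hlassoinit, ?_, ?_, ?_⟩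
  · unfold OccFin
    rw [h4, h2, h3, h1]
  · rw [h2, h1]
  · intro Acc hAcc hmem
    exact (hAcc _ _ (by rw [h2, h1]) (by unfold OccFin; rw [h4, h2, h3, h1])).1 hmem
end

section
/- Let A = (Q, I, P, Δ, C) be a Hanoi omega-automaton of index d and let ρ be an infinite run of A starting in an initial state. Then there exist finite run segments ρ_u and ρ_v with |ρ_u|, |ρ_v| ≤ (|Q|·d)² such that ρ_u ρ_v^ω is an infinite run of A starting in an initial state, Occ_{<∞}(C(ρ)) = Occ_{<∞}(C(ρ_u ρ_v^ω)), and Occ_∞(C(ρ)) = Occ_∞(C(ρ_u ρ_v^ω)). -/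
namespace Stmt3Aux

variable {Q P : Type} {d : ℕ}

inductive Seg (E : Set (Edge Q P d)) : Q → Q → List (Edge Q P d) → Prop
  | nil (a : Q) : Seg E a a []
  | cons (e : Edge Q P d) (he : e ∈ E) {b : Q} {L : List (Edge Q P d)}
      (h : Seg E e.dst b L) : Seg E e.src b (e :: L)

lemma Seg.append {E : Set (Edge Q P d)} {a m b : Q} {L1 L2 : List (Edge Q P d)}
    (h1 : Seg E a m L1) (h2 : Seg E m b L2) : Seg E a b (L1 ++ L2) := by
  induction h1 with
  | nil a => simpa using h2
  | cons e he h ih => exact Seg.cons e he (ih h2)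

lemma Seg.mem_of {E : Set (Edge Q P d)} {a b : Q} {L : List (Edge Q P d)}
    (h : Seg E a b L) : ∀ e ∈ L, e ∈ E := by
  induction h with
  | nil a => simp
  | cons e he h ih =>
    intro f hf
    rcases List.mem_cons.mp hf with rfl | hf
    · exact he
    · exact ih f hf

lemma Seg.nil_eq {E : Set (Edge Q P d)} {a b : Q} (h : Seg E a b []) : a = b := by
  cases h; rfl

lemma Seg.head_src {E : Set (Edge Q P d)} {a b : Q} {e : Edge Q P d} {L : List (Edge Q P d)}
    (h : Seg E a b (e :: L)) : e.src = a := by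
  cases h; rfl

lemma Seg.zero_src {E : Set (Edge Q P d)} {a b : Q} {L : List (Edge Q P d)}
    (h : Seg E a b L) (hL : 0 < L.length) : (L[0]'hL).src = a := by
  cases h with
  | nil => simp at hL
  | cons e he h => rfl

lemma Seg.getElem_dst {E : Set (Edge Q P d)} {a b : Q} {L : List (Edge Q P d)}
    (h : Seg E a b L) : ∀ i (h2 : i + 1 < L.length),
      (L[i]'(by omega)).dst = (L[i+1]'h2).src := by
  induction h with
  | nil a => intro i h2; simp at h2
  | cons e he h ih =>
    intro i h2
    match i with
    | 0 =>
      simp only [List.getElem_cons_zero, List.getElem_cons_succ]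
      exact (h.zero_src (by simpa using h2)).symm
    | i + 1 =>
      simp only [List.getElem_cons_succ]
      exact ih i (by simpa using h2)

lemma Seg.getLast_dst {E : Set (Edge Q P d)} {a b : Q} {L : List (Edge Q P d)}
    (h : Seg E a b L) (hL : L ≠ []) : (L.getLast hL).dst = b := by
  induction h with
  | nil a => exact absurd rfl hL
  | cons e he h ih =>
    rename_i L
    match L with
    | [] => simpa [List.getLast] using h.nil_eq
    | f :: L' => rw [List.getLast_cons (by simp)]; exact ih (by simp)

def stA : List (Edge Q P d) → Q → ℕ → Q
  | [], b, _ => b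
  | e :: _, _, 0 => e.src
  | _ :: L, b, i + 1 => stA L b i

lemma Seg.drop' {E : Set (Edge Q P d)} {a b : Q} {L : List (Edge Q P d)}
    (h : Seg E a b L) : ∀ i, Seg E (stA L b i) b (L.drop i) := by
  induction h with
  | nil a => intro i; rw [List.drop_nil]; exact Seg.nil a
  | cons e he h ih =>
    intro i
    match i with
    | 0 => exact Seg.cons e he h
    | i + 1 => exact ih i

lemma Seg.take' {E : Set (Edge Q P d)} {a b : Q} {L : List (Edge Q P d)}
    (h : Seg E a b L) : ∀ i, Seg E a (stA L b i) (L.take i) := by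
  induction h with
  | nil a => intro i; rw [List.take_nil]; exact Seg.nil a
  | cons e he h ih =>
    intro i
    match i with
    | 0 => exact Seg.nil e.src
    | i + 1 => exact Seg.cons e he (ih i)

lemma Seg.cut {E : Set (Edge Q P d)} {a b : Q} {L : List (Edge Q P d)}
    (h : Seg E a b L) {i j : ℕ} (hij : stA L b i = stA L b j) :
    Seg E a b (L.take i ++ L.drop j) :=
  Seg.append (h.take' i) (hij ▸ h.drop' j)

lemma seg_shorten [Fintype Q] {E : Set (Edge Q P d)} {a b : Q} :
    ∀ (n : ℕ) (L : List (Edge Q P d)), L.length ≤ n → Seg E a b L →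
    ∃ L', Seg E a b L' ∧ L'.length < Fintype.card Q ∧ ∀ e ∈ L', e ∈ L := by
  intro n
  induction n with
  | zero =>
    intro L hlen hL
    have : L = [] := List.eq_nil_of_length_eq_zero (Nat.le_zero.mp hlen)
    subst this
    have : Nonempty Q := ⟨a⟩
    exact ⟨[], hL, Fintype.card_pos, by simp⟩
  | succ n ih =>
    intro L hlen hL
    by_cases h : L.length < Fintype.card Q
    · exact ⟨L, hL, h, fun e he => he⟩
    · push_neg at h
      obtain ⟨x, y, hxy, hf⟩ := Fintype.exists_ne_map_eq_of_card_lt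
        (fun k : Fin (Fintype.card Q + 1) => stA L b k) (by simp)
      have hcut : ∀ (i j : Fin (Fintype.card Q + 1)), (i : ℕ) < j →
          stA L b i = stA L b j →
          ∃ L', Seg E a b L' ∧ L'.length < Fintype.card Q ∧ ∀ e ∈ L', e ∈ L := by
        intro i j hlt heq
        have hjL : (j : ℕ) ≤ L.length := le_trans (by omega) h
        have hlen' : (L.take i ++ L.drop j).length ≤ n := by
          simp only [List.length_append, List.length_take, List.length_drop]
          omega
        obtain ⟨L', h1, h2, h3⟩ := ih _ hlen' (hL.cut heq)
        refine ⟨L', h1, h2, fun e he => ?_⟩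
        rcases List.mem_append.mp (h3 e he) with h4 | h4
        · exact List.take_subset _ _ h4
        · exact List.drop_subset _ _ h4
      rcases lt_or_gt_of_ne hxy with hlt | hlt
      · exact hcut x y hlt hf
      · exact hcut y x hlt hf.symm


section run
variable {E : Set (Edge Q P d)} {ρ : ℕ → Edge Q P d}
  (hmem : ∀ n, ρ n ∈ E) (hchain : ∀ n, (ρ n).dst = (ρ (n + 1)).src)

include hmem hchain

lemma run_seg : ∀ (k i : ℕ),
    Seg E ((ρ i).src) ((ρ (i + k)).src) ((List.range k).map (fun t => ρ (i + t))) := by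
  intro k
  induction k with
  | zero => intro i; simpa using Seg.nil ((ρ i).src)
  | succ k ih =>
    intro i
    rw [List.range_succ_eq_map]
    simp only [List.map_cons, List.map_map, Nat.add_zero, Function.comp_def]
    have h2 : Seg E ((ρ (i+1)).src) ((ρ (i + (k+1))).src)
        ((List.range k).map (fun t => ρ (i + 1 + t))) := by
      have := ih (i + 1)
      rwa [show i + 1 + k = i + (k+1) by omega] at this
    have h3 : ((List.range k).map (fun t => ρ (i + 1 + t)))
        = ((List.range k).map (fun t => ρ (i + (t + 1)))) := by
      apply List.map_congr_left; intro t _; congr 1; omega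
    rw [h3] at h2
    rw [← hchain i] at h2
    exact Seg.cons (ρ i) (hmem i) h2

lemma cover [Fintype Q] :
    ∀ (picks : List ℕ) (i n : ℕ), picks.Pairwise (· < ·) → i ≤ n →
      (∀ m ∈ picks, i ≤ m ∧ m < n) →
    ∃ L, Seg E ((ρ i).src) ((ρ n).src) L ∧
      (∀ e ∈ L, ∃ m, i ≤ m ∧ e = ρ m) ∧
      (∀ m ∈ picks, ρ m ∈ L) ∧
      L.length + 1 ≤ (picks.length + 1) * Fintype.card Q := by
  intro picks
  induction picks with
  | nil =>
    intro i n _ hin _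
    have base := run_seg hmem hchain (n - i) i
    rw [Nat.add_sub_cancel' hin] at base
    obtain ⟨L, hL, hlen, hsub⟩ := seg_shorten _ _ le_rfl base
    refine ⟨L, hL, ?_, by simp, by simpa using hlen⟩
    intro e he
    obtain ⟨t, _, ht⟩ := List.mem_map.mp (hsub e he)
    exact ⟨i + t, Nat.le_add_right i t, ht.symm⟩
  | cons m rest ih =>
    intro i n hsort hin hmem'
    obtain ⟨him, hmn⟩ := hmem' m (List.mem_cons_self)
    have base1 := run_seg hmem hchain (m - i) i
    rw [Nat.add_sub_cancel' him] at base1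
    obtain ⟨L1, hL1, hlen1, hsub1⟩ := seg_shorten _ _ le_rfl base1
    have hsort' : rest.Pairwise (· < ·) := (List.pairwise_cons.mp hsort).2
    have hmlt : ∀ m' ∈ rest, m < m' := (List.pairwise_cons.mp hsort).1
    obtain ⟨L2, hL2, hsub2, hpk2, hlen2⟩ := ih (m + 1) n hsort' hmn
      (fun m' hm' => ⟨hmlt m' hm', (hmem' m' (List.mem_cons_of_mem m hm')).2⟩)
    rw [← hchain m] at hL2
    refine ⟨L1 ++ ρ m :: L2, Seg.append hL1 (Seg.cons (ρ m) (hmem m) hL2), ?_, ?_, ?_⟩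
    · intro e he
      rcases List.mem_append.mp he with h4 | h4
      · obtain ⟨t, _, ht⟩ := List.mem_map.mp (hsub1 e h4)
        exact ⟨i + t, Nat.le_add_right i t, ht.symm⟩
      · rcases List.mem_cons.mp h4 with rfl | h5
        · exact ⟨m, him, rfl⟩
        · obtain ⟨m', hm'1, hm'2⟩ := hsub2 e h5
          exact ⟨m', by omega, hm'2⟩
    · intro m' hm'
      rcases List.mem_cons.mp hm' with rfl | h5
      · exact List.mem_append.mpr (Or.inr (List.mem_cons_self))
      · exact List.mem_append.mpr (Or.inr (List.mem_cons_of_mem _ (hpk2 m' h5)))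
    · simp only [List.length_append, List.length_cons]
      have : (rest.length + 1 + 1) * Fintype.card Q
          = (rest.length + 1) * Fintype.card Q + Fintype.card Q := by ring
      omega

end run

lemma exists_picks {ρ : ℕ → Edge Q P d} :
    ∀ (cs : List (Fin d)), (∀ c ∈ cs, c ∈ OccInf (colorSeq ρ)) → ∀ s : ℕ,
    ∃ (picks : List ℕ) (t : ℕ), picks.Pairwise (· < ·) ∧ picks.length = cs.length ∧
      (∀ m ∈ picks, s ≤ m ∧ m < t) ∧ s ≤ t ∧
      ∀ c ∈ cs, ∃ m ∈ picks, (ρ m).color = c := by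
  intro cs
  induction cs with
  | nil => exact fun _ s => ⟨[], s, by simp, by simp, by simp, le_rfl, by simp⟩
  | cons c cs ih =>
    intro h s
    obtain ⟨m, hm, hcol⟩ := h c (List.mem_cons_self) s
    obtain ⟨picks, t, hsort, hlen, hbd, hst, hcov⟩ :=
      ih (fun c' hc' => h c' (List.mem_cons_of_mem c hc')) (m + 1)
    refine ⟨m :: picks, t, ?_, by simp [hlen], ?_, by omega, ?_⟩
    · exact List.pairwise_cons.mpr ⟨fun m' hm' => by have := (hbd m' hm').1; omega, hsort⟩
    · intro m' hm'
      rcases List.mem_cons.mp hm' with rfl | h5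
      · exact ⟨hm, by omega⟩
      · have := hbd m' h5; omega
    · intro c' hc'
      rcases List.mem_cons.mp hc' with rfl | h5
      · exact ⟨m, List.mem_cons_self, hcol⟩
      · obtain ⟨m', h1, h2⟩ := hcov c' h5
        exact ⟨m', List.mem_cons_of_mem _ h1, h2⟩


def colSet (L : List (Edge Q P d)) : Set (Fin d) := {c | ∃ e ∈ L, e.color = c}

end Stmt3Aux

/-- small lasso property for general HOA of index `d`, with run segments of
length at most `(|Q|·d)²`, preserving the sets of finitely and infinitely occurring
colors. -/
theorem stmt3 {Q P : Type} [Fintype Q] {d : ℕ}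
    (A : HOA Q P d)
    (ρ : ℕ → Edge Q P d) (hrun : IsRun A ρ) (hinit : (ρ 0).src ∈ A.I) :
    ∃ (u v : List (Edge Q P d)) (hv : v ≠ []),
      u.length ≤ (Fintype.card Q * d) ^ 2 ∧ v.length ≤ (Fintype.card Q * d) ^ 2 ∧
      IsRun A (lassoSeq u v hv) ∧ ((lassoSeq u v hv) 0).src ∈ A.I ∧
      OccFin (colorSeq ρ) = OccFin (colorSeq (lassoSeq u v hv)) ∧
      OccInf (colorSeq ρ) = OccInf (colorSeq (lassoSeq u v hv)) := by
  classical
  open Stmt3Aux in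
  obtain ⟨hmem, hchain⟩ := hrun
  have hd : 0 < d := (ρ 0).color.pos
  have hQ : (0:ℕ) < Fintype.card Q := @Fintype.card_pos Q _ ⟨(ρ 0).src⟩
  -- a threshold N beyond which all colors occur infinitely often
  have h1 : ∀ c : Fin d, ∃ N, c ∉ OccInf (colorSeq ρ) → ∀ n, N ≤ n → colorSeq ρ n ≠ c := by
    intro c
    by_cases hc : c ∈ OccInf (colorSeq ρ)
    · exact ⟨0, fun h => absurd hc h⟩
    · rw [OccInf, Set.mem_setOf_eq] at hc
      push_neg at hc
      obtain ⟨N, hN⟩ := hc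
      exact ⟨N, fun _ => hN⟩
  choose Nc hNc using h1
  set N := Finset.univ.sup Nc with hNdef
  have hN : ∀ n, N ≤ n → colorSeq ρ n ∈ OccInf (colorSeq ρ) := by
    intro n hn
    by_contra hcon
    exact hNc _ hcon n (le_trans (Finset.le_sup (Finset.mem_univ _)) hn) rfl
  -- a state q visited infinitely often
  obtain ⟨q, hqinf⟩ := Finite.exists_infinite_fiber (fun n => (ρ n).src)
  have hq : ∀ M, ∃ n, M ≤ n ∧ (ρ n).src = q := by
    intro M
    obtain ⟨n, hn1, hn2⟩ := (Set.infinite_coe_iff.mp hqinf).exists_gt M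
    exact ⟨n, le_of_lt hn2, hn1⟩
  -- the finset of infinitely recurring colors
  set Iinf : Finset (Fin d) := Finset.univ.filter (fun c => c ∈ OccInf (colorSeq ρ)) with hIinf
  have hIinf_mem : ∀ c, c ∈ Iinf ↔ c ∈ OccInf (colorSeq ρ) := by
    intro c; simp [hIinf]
  have hIinf_ne : Iinf.Nonempty := by
    obtain ⟨c, hc⟩ := Finite.exists_infinite_fiber (colorSeq ρ)
    refine ⟨c, (hIinf_mem c).mpr ?_⟩
    intro M
    obtain ⟨n, hn1, hn2⟩ := (Set.infinite_coe_iff.mp hc).exists_gt M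
    exact ⟨n, le_of_lt hn2, hn1⟩
  set F : Finset (Fin d) := Finset.univ.filter
      (fun c => c ∈ Set.range (colorSeq ρ) ∧ c ∉ OccInf (colorSeq ρ)) with hF
  have hFcard : F.card + 1 ≤ d := by
    have hdisj : Disjoint F Iinf := by
      rw [Finset.disjoint_left]
      intro c hcF hcI
      rw [hF, Finset.mem_filter] at hcF
      exact hcF.2.2 ((hIinf_mem c).mp hcI)
    have hcu := Finset.card_union_of_disjoint hdisj
    have hle := Finset.card_le_univ (F ∪ Iinf)
    rw [Fintype.card_fin] at hle
    have hpos : 0 < Iinf.card := Finset.card_pos.mpr hIinf_ne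
    omega
  -- witnesses for the finitely occurring colors
  have hFw : ∀ c : Fin d, ∃ n, c ∈ F → (colorSeq ρ n = c ∧ n < N) := by
    intro c
    by_cases hc : c ∈ F
    · rw [hF, Finset.mem_filter] at hc
      obtain ⟨-, ⟨n, hn⟩, hninf⟩ := hc
      refine ⟨n, fun _ => ⟨hn, ?_⟩⟩
      by_contra h
      push_neg at h
      exact hninf (hn ▸ hN n h)
    · exact ⟨0, fun h => absurd h hc⟩
  choose w hw using hFw
  obtain ⟨i, hNi, hiq⟩ := hq N
  -- the prefix segment
  set picksU := (F.image w).sort (· ≤ ·) with hpU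
  have hpU_sorted : picksU.Pairwise (· < ·) := List.sortedLT_iff_pairwise.mp (Finset.sortedLT_sort _)
  have hpU_mem : ∀ m ∈ picksU, 0 ≤ m ∧ m < i := by
    intro m hm
    rw [hpU, Finset.mem_sort] at hm
    obtain ⟨c, hc, rfl⟩ := Finset.mem_image.mp hm
    exact ⟨Nat.zero_le _, lt_of_lt_of_le (hw c hc).2 hNi⟩
  obtain ⟨Lu, hLu_seg, hLu_sub, hLu_pk, hLu_len⟩ :=
    cover hmem hchain picksU 0 i hpU_sorted (Nat.zero_le i) hpU_mem
  rw [hiq] at hLu_seg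
  -- the cycle segment
  have hIlist : ∀ c ∈ Iinf.toList, c ∈ OccInf (colorSeq ρ) :=
    fun c hc => (hIinf_mem c).mp (Finset.mem_toList.mp hc)
  obtain ⟨picksV, t, hpV_sorted, hpV_len, hpV_bd, hit, hpV_cov⟩ :=
    exists_picks Iinf.toList hIlist i
  obtain ⟨j, htj, hjq⟩ := hq t
  obtain ⟨Lv, hLv_seg, hLv_sub, hLv_pk, hLv_len⟩ :=
    cover hmem hchain picksV i j hpV_sorted (le_trans hit htj)
      (fun m hm => ⟨(hpV_bd m hm).1, lt_of_lt_of_le (hpV_bd m hm).2 htj⟩)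
  rw [hiq, hjq] at hLv_seg
  obtain ⟨c0, hc0⟩ := hIinf_ne
  obtain ⟨m0, hm0, hm0c⟩ := hpV_cov c0 (Finset.mem_toList.mpr hc0)
  have hvne : Lv ≠ [] := by
    intro h
    rw [h] at hLv_pk
    exact absurd (hLv_pk m0 hm0) List.not_mem_nil
  have hvl : 0 < Lv.length := List.length_pos_iff.mpr hvne
  -- basic facts about the lasso
  have hlt : ∀ n (h : n < Lu.length), lassoSeq Lu Lv hvne n = Lu[n]'h := by
    intro n h
    simp only [lassoSeq, dif_pos h]
  have hge : ∀ s : ℕ,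
      lassoSeq Lu Lv hvne (Lu.length + s) = Lv[s % Lv.length]'(Nat.mod_lt _ hvl) := by
    intro s
    have h1 : ¬ (Lu.length + s < Lu.length) := by omega
    simp only [lassoSeq, dif_neg h1, Nat.add_sub_cancel_left]
  have hlassoMem : ∀ n, lassoSeq Lu Lv hvne n ∈ A.Δ := by
    intro n
    by_cases h : n < Lu.length
    · rw [hlt n h]
      exact hLu_seg.mem_of _ (List.getElem_mem h)
    · obtain ⟨s, rfl⟩ : ∃ s, n = Lu.length + s := ⟨n - Lu.length, by omega⟩
      rw [hge s]
      exact hLv_seg.mem_of _ (List.getElem_mem _)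
  have hchain' : ∀ n, (lassoSeq Lu Lv hvne n).dst = (lassoSeq Lu Lv hvne (n+1)).src := by
    intro n
    rcases lt_trichotomy (n+1) Lu.length with h | h | h
    · rw [hlt n (by omega), hlt (n+1) h]
      exact hLu_seg.getElem_dst n h
    · have hn : n < Lu.length := by omega
      have hne : Lu ≠ [] := by intro hc; rw [hc] at hn; simp at hn
      rw [hlt n hn]
      have h0 : lassoSeq Lu Lv hvne (n+1) = Lv[0]'hvl := by
        rw [h]
        have := hge 0
        simpa using this
      rw [h0]
      have hdst : (Lu[n]'hn).dst = q := by
        have h5 := hLu_seg.getLast_dst hne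
        rw [List.getLast_eq_getElem] at h5
        simp only [show Lu.length - 1 = n by omega] at h5
        exact h5
      rw [hdst]
      exact (hLv_seg.zero_src hvl).symm
    · obtain ⟨s, rfl⟩ : ∃ s, n = Lu.length + s := ⟨n - Lu.length, by omega⟩
      have e2 : Lu.length + s + 1 = Lu.length + (s + 1) := by omega
      rw [hge s, e2, hge (s+1)]
      have heqA : (s+1) % Lv.length = (s % Lv.length + 1) % Lv.length :=
        (Nat.mod_add_mod s Lv.length 1).symm
      have hsl : s % Lv.length < Lv.length := Nat.mod_lt _ hvl
      by_cases hr : s % Lv.length + 1 < Lv.length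
      · have heq : (s+1) % Lv.length = s % Lv.length + 1 :=
          heqA.trans (Nat.mod_eq_of_lt hr)
        simp only [heq]
        exact hLv_seg.getElem_dst (s % Lv.length) hr
      · have heq0 : (s+1) % Lv.length = 0 := by
          rw [heqA, show s % Lv.length + 1 = Lv.length by omega]
          exact Nat.mod_self _
        simp only [heq0, show s % Lv.length = Lv.length - 1 by omega]
        have h5 := hLv_seg.getLast_dst hvne
        rw [List.getLast_eq_getElem] at h5
        rw [h5]
        exact (hLv_seg.zero_src hvl).symm
  -- initial state
  have hinit' : (lassoSeq Lu Lv hvne 0).src ∈ A.I := by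
    by_cases hu0 : Lu = []
    · have hq0 : (ρ 0).src = q := by
        rw [hu0] at hLu_seg
        exact hLu_seg.nil_eq
      have h0 : lassoSeq Lu Lv hvne 0 = Lv[0]'hvl := by
        have := hge 0
        rw [hu0] at this ⊢
        simpa using this
      rw [h0, hLv_seg.zero_src hvl, ← hq0]
      exact hinit
    · have hpos : 0 < Lu.length := List.length_pos_iff.mpr hu0
      rw [hlt 0 hpos, hLu_seg.zero_src hpos]
      exact hinit
  -- color set computations
  have hOccV : OccInf (colorSeq (lassoSeq Lu Lv hvne)) = colSet Lv := by
    ext c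
    constructor
    · intro hc
      obtain ⟨n, hn, he⟩ := hc Lu.length
      obtain ⟨s, rfl⟩ : ∃ s, n = Lu.length + s := ⟨n - Lu.length, by omega⟩
      refine ⟨lassoSeq Lu Lv hvne (Lu.length + s), ?_, he⟩
      rw [hge s]
      exact List.getElem_mem _
    · rintro ⟨e, heL, rfl⟩
      obtain ⟨tt, htt, hte⟩ := List.getElem_of_mem heL
      intro M
      refine ⟨Lu.length + (tt + Lv.length * M), ?_, ?_⟩
      · have : M ≤ Lv.length * M := Nat.le_mul_of_pos_left M hvl
        omega
      · show (lassoSeq Lu Lv hvne _).color = e.color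
        rw [hge]
        simp only [Nat.add_mul_mod_self_left, Nat.mod_eq_of_lt htt]
        rw [hte]
  have hcolV_eq : colSet Lv = OccInf (colorSeq ρ) := by
    ext c
    constructor
    · rintro ⟨e, heL, rfl⟩
      obtain ⟨m, him2, he⟩ := hLv_sub e heL
      subst he
      exact hN m (le_trans hNi him2)
    · intro hc
      obtain ⟨m0', hm0', hc0'⟩ := hpV_cov c (Finset.mem_toList.mpr ((hIinf_mem c).mpr hc))
      exact ⟨ρ m0', hLv_pk m0' hm0', hc0'⟩
  have hrange_lasso : Set.range (colorSeq (lassoSeq Lu Lv hvne)) = colSet Lu ∪ colSet Lv := by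
    ext c
    constructor
    · rintro ⟨n, rfl⟩
      by_cases h : n < Lu.length
      · left
        exact ⟨lassoSeq Lu Lv hvne n, by rw [hlt n h]; exact List.getElem_mem h, rfl⟩
      · right
        obtain ⟨s, rfl⟩ : ∃ s, n = Lu.length + s := ⟨n - Lu.length, by omega⟩
        refine ⟨lassoSeq Lu Lv hvne (Lu.length + s), ?_, rfl⟩
        rw [hge s]
        exact List.getElem_mem _
    · rintro (⟨e, heL, rfl⟩ | ⟨e, heL, rfl⟩)
      · obtain ⟨tt, htt, hte⟩ := List.getElem_of_mem heL
        refine ⟨tt, ?_⟩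
        show (lassoSeq Lu Lv hvne tt).color = e.color
        rw [hlt tt htt, hte]
      · obtain ⟨tt, htt, hte⟩ := List.getElem_of_mem heL
        refine ⟨Lu.length + tt, ?_⟩
        show (lassoSeq Lu Lv hvne _).color = e.color
        rw [hge]
        simp only [Nat.mod_eq_of_lt htt]
        rw [hte]
  have hrange_rho : Set.range (colorSeq ρ) = colSet Lu ∪ colSet Lv := by
    ext c
    constructor
    · rintro ⟨n, rfl⟩
      by_cases h : colorSeq ρ n ∈ OccInf (colorSeq ρ)
      · right
        rw [hcolV_eq]
        exact h
      · left
        have hcF : colorSeq ρ n ∈ F := by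
          rw [hF, Finset.mem_filter]
          exact ⟨Finset.mem_univ _, ⟨n, rfl⟩, h⟩
        have hmemU : w (colorSeq ρ n) ∈ picksU := by
          rw [hpU, Finset.mem_sort]
          exact Finset.mem_image_of_mem w hcF
        exact ⟨ρ (w (colorSeq ρ n)), hLu_pk _ hmemU, (hw _ hcF).1⟩
    · rintro (⟨e, heL, rfl⟩ | ⟨e, heL, rfl⟩)
      · obtain ⟨m, -, hm⟩ := hLu_sub e heL
        subst hm
        exact ⟨m, rfl⟩
      · obtain ⟨m, -, hm⟩ := hLv_sub e heL
        subst hm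
        exact ⟨m, rfl⟩
  -- length bounds
  have hbu : Lu.length ≤ (Fintype.card Q * d) ^ 2 := by
    have h1 : picksU.length ≤ F.card := by
      rw [hpU, Finset.length_sort]
      exact Finset.card_image_le
    have h2 : (picksU.length + 1) * Fintype.card Q ≤ d * Fintype.card Q :=
      Nat.mul_le_mul_right _ (by omega)
    have h3 : Lu.length + 1 ≤ Fintype.card Q * d := by
      rw [mul_comm]
      omega
    have h4 : Fintype.card Q * d ≤ (Fintype.card Q * d) ^ 2 :=
      Nat.le_self_pow two_ne_zero _
    omega
  have hbv : Lv.length ≤ (Fintype.card Q * d) ^ 2 := by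
    have h1 : picksV.length ≤ d := by
      rw [hpV_len, Finset.length_toList]
      have := Finset.card_le_univ Iinf
      rwa [Fintype.card_fin] at this
    have h2 : (picksV.length + 1) * Fintype.card Q ≤ (d + 1) * Fintype.card Q :=
      Nat.mul_le_mul_right _ (by omega)
    have h3 : Lv.length + 1 ≤ d * Fintype.card Q + Fintype.card Q := by
      have : (d + 1) * Fintype.card Q = d * Fintype.card Q + Fintype.card Q := by ring
      omega
    have h4 : Fintype.card Q ≤ Fintype.card Q * d := Nat.le_mul_of_pos_right _ hd
    have h5 : 2 * (Fintype.card Q * d) ≤ (Fintype.card Q * d) ^ 2 + 1 := by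
      rcases Nat.eq_zero_or_pos (Fintype.card Q * d) with h | h
      · simp [h]
      · obtain ⟨y, hy⟩ : ∃ y, Fintype.card Q * d = y + 1 := ⟨Fintype.card Q * d - 1, by omega⟩
        rw [hy]
        ring_nf
        nlinarith [Nat.zero_le (y * y)]
    have h6 : d * Fintype.card Q = Fintype.card Q * d := by ring
    omega
  exact ⟨Lu, Lv, hvne, hbu, hbv, ⟨hlassoMem, hchain'⟩, hinit', by
    rw [OccFin, OccFin, hrange_lasso, hrange_rho, hOccV, hcolV_eq], by
    rw [hOccV, hcolV_eq]⟩
end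

section
/- Let A be a Hanoi omega-automaton of index d with safety acceptance condition S ⊆ [d]. Let A' be obtained from A by adding a fresh sink state q_n with self-loops q_n →^{True | c} q_n for every c ∈ [d] \ S, and replacing each transition p →^{φ | c} q of A with c ∉ S by the transition p →^{φ | c} q_n. Then the language of A under the safety condition S equals the language of A' under the co-Büchi condition Fin([d] \ S) (no color outside S occurs infinitely often). -/
/-- The transformation of a safety HOA into a co-Büchi HOA: add a fresh sink state
(`Sum.inr ()`) with a `True`-guarded self-loop of color `c` for every `c ∉ S`, keep the
transitions of color in `S`, and redirect every transition of color `c ∉ S` to the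
sink. -/
def safetyToCoBuchi {Q P : Type} {d : ℕ} (A : HOA Q P d) (S : Set (Fin d)) :
    HOA (Q ⊕ Unit) P d where
  I := Sum.inl '' A.I
  Δ := {t' | (∃ t ∈ A.Δ, t.color ∈ S ∧ t' = ⟨Sum.inl t.src, t.guard, t.color, Sum.inl t.dst⟩)
      ∨ (∃ t ∈ A.Δ, t.color ∉ S ∧ t' = ⟨Sum.inl t.src, t.guard, t.color, Sum.inr ()⟩)
      ∨ (∃ c : Fin d, c ∉ S ∧ t' = ⟨Sum.inr (), .tt, c, Sum.inr ()⟩)}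

/-- the language of `A` under the safety condition `S` equals the language
of the transformed automaton under the co-Büchi condition `Fin([d] \ S)` (no color
outside `S` occurs infinitely often). -/
theorem stmt7 {Q P : Type} [Fintype Q] {d : ℕ} (A : HOA Q P d) (S : Set (Fin d)) :
    Lang A {s | ∀ n, s n ∈ S} =
      Lang (safetyToCoBuchi A S) {s | ∀ c : Fin d, c ∉ S → c ∉ OccInf s} := by
  ext w
  constructor
  · rintro ⟨ρ, ⟨hΔ, hcons⟩, hI, hS, hsat⟩
    refine ⟨fun n => ⟨Sum.inl (ρ n).src, (ρ n).guard, (ρ n).color, Sum.inl (ρ n).dst⟩,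
      ⟨fun n => Or.inl ⟨ρ n, hΔ n, hS n, rfl⟩, fun n => by simp [hcons n]⟩,
      ⟨(ρ 0).src, hI, rfl⟩, ?_, hsat⟩
    intro c hc hocc
    obtain ⟨n, _, hn⟩ := hocc 0
    exact hc (hn ▸ hS n)
  · rintro ⟨ρ, ⟨hΔ, hcons⟩, hI, hacc, hsat⟩
    have key : ∀ n, (ρ n).src = Sum.inr () → (ρ n).color ∉ S ∧ (ρ n).dst = Sum.inr () := by
      intro n hn
      rcases hΔ n with ⟨t, _, _, he⟩ | ⟨t, _, _, he⟩ | ⟨c, hc, he⟩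
      · rw [he] at hn; simp at hn
      · rw [he] at hn; simp at hn
      · rw [he]; exact ⟨hc, rfl⟩
    have hnosink : ∀ n, (ρ n).dst ≠ Sum.inr () := by
      by_contra h
      push_neg at h
      obtain ⟨N, hN⟩ := h
      have hsrc : ∀ k, (ρ (N + 1 + k)).src = Sum.inr () := by
        intro k
        induction k with
        | zero => rw [← hcons N]; exact hN
        | succ k ih =>
          have := (key _ ih).2
          rw [show N + 1 + (k + 1) = (N + 1 + k) + 1 by ring, ← hcons]
          exact this
      have hd : Finite (Fin d) := inferInstance
      obtain ⟨c, hcinf⟩ := Finite.exists_infinite_fiber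
        (f := fun k => (ρ (N + 1 + k)).color)
      rw [Set.infinite_coe_iff] at hcinf
      have hcne : c ∉ S := by
        obtain ⟨k, hk⟩ := hcinf.nonempty
        have := (key _ (hsrc k)).1
        simp only [Set.mem_preimage, Set.mem_singleton_iff] at hk
        rw [← hk]; exact this
      refine hacc c hcne ?_
      intro M
      obtain ⟨k, hk, hMk⟩ := hcinf.exists_gt M
      simp only [Set.mem_preimage, Set.mem_singleton_iff] at hk
      exact ⟨N + 1 + k, le_trans (le_of_lt hMk) (by omega), hk⟩
    have hfirst : ∀ n, ∃ t ∈ A.Δ, t.color ∈ S ∧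
        ρ n = ⟨Sum.inl t.src, t.guard, t.color, Sum.inl t.dst⟩ := by
      intro n
      rcases hΔ n with h | ⟨t, _, _, he⟩ | ⟨c, _, he⟩
      · exact h
      · exact absurd (by rw [he]) (hnosink n)
      · exact absurd (by rw [he]) (hnosink n)
    choose t ht htS he using hfirst
    refine ⟨t, ⟨ht, fun n => ?_⟩, ?_, htS, fun n => ?_⟩
    · have := hcons n
      rw [he n, he (n + 1)] at this
      simpa using this
    · have := hI
      rw [he 0] at this
      obtain ⟨q, hq, hq'⟩ := this
      simp only [Sum.inl.injEq] at hq'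
      rwa [hq'] at hq
    · have := hsat n
      rw [he n] at this
      exact this
end

section
/- Every Hanoi omega-automaton with a Rabin acceptance condition, and every Hanoi omega-automaton with a Muller acceptance condition, can be effectively transformed into an equivalent Hanoi omega-automaton with a Streett acceptance condition (recognizing the same language over the same atomic propositions) whose size is polynomial in the size of the original automaton (including the size of its acceptance condition). -/
/-- The size (number of symbols) of a Boolean formula. -/
def BForm.size {P : Type} : BForm P → ℕ
  | .tt => 1
  | .var _ => 1
  | .not φ => BForm.size φ + 1
  | .and φ ψ => BForm.size φ + BForm.size ψ + 1
  | .or φ ψ => BForm.size φ + BForm.size ψ + 1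

/-- The size of an HOA: `|Q| + |P| +` total size of the transition guards. -/
noncomputable def hoaSize {Q P : Type} [Fintype Q] [Fintype P] {d : ℕ}
    (A : HOA Q P d) (h : A.Δ.Finite) : ℕ :=
  Fintype.card Q + Fintype.card P + ∑ t ∈ h.toFinset, t.guard.size

/-- Rabin acceptance for a list of pairs `(Eᵢ, Fᵢ)`: `⋁ᵢ (Inf(Eᵢ) ∧ Fin(Fᵢ))`. -/
def RabinAcc {d : ℕ} (pairs : List (Set (Fin d) × Set (Fin d))) : Set (ℕ → Fin d) :=
  {s | ∃ p ∈ pairs, (∃ c ∈ p.1, c ∈ OccInf s) ∧ ∀ c ∈ p.2, c ∉ OccInf s}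

/-- Streett acceptance for a list of pairs `(Eᵢ, Fᵢ)`: `⋀ᵢ (Fin(Eᵢ) ∨ Inf(Fᵢ))`. -/
def StreettAcc {d : ℕ} (pairs : List (Set (Fin d) × Set (Fin d))) : Set (ℕ → Fin d) :=
  {s | ∀ p ∈ pairs, (∀ c ∈ p.1, c ∉ OccInf s) ∨ (∃ c ∈ p.2, c ∈ OccInf s)}

/-- Muller acceptance for a list of sets `Eᵢ`: `⋁ᵢ ⋀_{c ∈ Eᵢ} Inf({c})`. -/
def MullerAcc {d : ℕ} (sets : List (Set (Fin d))) : Set (ℕ → Fin d) :=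
  {s | ∃ E ∈ sets, ∀ c ∈ E, c ∈ OccInf s}
section Stmt10Aux

open Classical

namespace Stmt10

/-- Pairing of a value with a copy index. -/
def pr {m k : ℕ} (a : Fin m) (i : Fin k) : Fin (m * k) := finProdFinEquiv (a, i)

lemma pr_inj {m k : ℕ} {a b : Fin m} {i j : Fin k} (h : pr a i = pr b j) :
    a = b ∧ i = j := by
  have h' : ((a, i) : Fin m × Fin k) = (b, j) := finProdFinEquiv.injective h
  exact ⟨congrArg Prod.fst h', congrArg Prod.snd h'⟩

lemma pr_symm_snd {m k : ℕ} (a : Fin m) (i : Fin k) :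
    (finProdFinEquiv.symm (pr a i)).2 = i := by
  simp [pr]

/-- Lift an edge into copy `i` of the disjoint union. -/
def liftE {P : Type} {n k d : ℕ} (i : Fin k) (t : Edge (Fin n) P d) :
    Edge (Fin (n * k)) P (d * k) :=
  ⟨pr t.src i, t.guard, pr t.color i, pr t.dst i⟩

lemma liftE_inj {P : Type} {n k d : ℕ} (i : Fin k) :
    Function.Injective (liftE (P := P) (n := n) (d := d) i) := by
  rintro ⟨s, g, c, t⟩ ⟨s', g', c', t'⟩ h
  simp only [liftE, Edge.mk.injEq] at h
  obtain ⟨h1, h2, h3, h4⟩ := h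
  have e1 := (pr_inj h1).1
  have e3 := (pr_inj h3).1
  have e4 := (pr_inj h4).1
  simp_all

/-- The disjoint union of `k` copies of `A`, colors tagged by the copy index. -/
def prodHOA {P : Type} {n d : ℕ} (A : HOA (Fin n) P d) (k : ℕ) :
    HOA (Fin (n * k)) P (d * k) :=
  ⟨⋃ i, (fun q => pr q i) '' A.I, ⋃ i, liftE i '' A.Δ⟩

/-- Lift a Streett pair of copy `i`: vacuously satisfied on any other copy. -/
def liftPair {d k : ℕ} (i : Fin k) (p : Set (Fin d) × Set (Fin d)) :
    Set (Fin (d * k)) × Set (Fin (d * k)) :=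
  ((fun c => pr c i) '' p.1,
   {x | (finProdFinEquiv.symm x).2 ≠ i} ∪ (fun c => pr c i) '' p.2)

def liftedPairs {d k : ℕ} (Ls : Fin k → List (Set (Fin d) × Set (Fin d))) :
    List (Set (Fin (d * k)) × Set (Fin (d * k))) :=
  ((List.finRange k).map fun i => (Ls i).map (liftPair i)).flatten

lemma mem_liftedPairs {d k : ℕ} {Ls : Fin k → List (Set (Fin d) × Set (Fin d))}
    {p' : Set (Fin (d * k)) × Set (Fin (d * k))} (h : p' ∈ liftedPairs Ls) :
    ∃ j p, p ∈ Ls j ∧ p' = liftPair j p := by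
  simp only [liftedPairs, List.mem_flatten, List.mem_map, List.mem_finRange] at h
  obtain ⟨l, ⟨j, -, rfl⟩, hl⟩ := h
  obtain ⟨p, hp, rfl⟩ := List.mem_map.mp hl
  exact ⟨j, p, hp, rfl⟩

lemma liftPair_mem {d k : ℕ} {Ls : Fin k → List (Set (Fin d) × Set (Fin d))}
    {i : Fin k} {p : Set (Fin d) × Set (Fin d)} (h : p ∈ Ls i) :
    liftPair i p ∈ liftedPairs Ls := by
  simp only [liftedPairs, List.mem_flatten, List.mem_map, List.mem_finRange]
  exact ⟨(Ls i).map (liftPair i), ⟨i, trivial, rfl⟩, List.mem_map_of_mem h⟩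

lemma liftedPairs_length {d k : ℕ} (Ls : Fin k → List (Set (Fin d) × Set (Fin d))) :
    (liftedPairs Ls).length = ∑ i : Fin k, (Ls i).length := by
  simp [liftedPairs, Fin.sum_univ_def, Function.comp_def]

lemma occInf_nonempty {d : ℕ} (s : ℕ → Fin d) : ∃ c, c ∈ OccInf s := by
  obtain ⟨c, hc⟩ := Finite.exists_infinite_fiber s
  refine ⟨c, fun N => ?_⟩
  obtain ⟨m, hm, hlt⟩ := (Set.infinite_coe_iff.mp hc).exists_gt N
  exact ⟨m, le_of_lt hlt, hm⟩

lemma occInf_pr {d k : ℕ} (i : Fin k) (s : ℕ → Fin d) :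
    OccInf (fun n => pr (s n) i) = (fun c => pr c i) '' OccInf s := by
  ext x
  constructor
  · intro hx
    obtain ⟨m, -, hm⟩ := hx 0
    refine ⟨s m, fun N => ?_, hm⟩
    obtain ⟨m', hm', he⟩ := hx N
    exact ⟨m', hm', (pr_inj (he.trans hm.symm)).1⟩
  · rintro ⟨c, hc, rfl⟩ N
    obtain ⟨m, hm, he⟩ := hc N
    exact ⟨m, hm, show pr (s m) i = pr c i by rw [he]⟩

lemma streett_lift_iff {d k : ℕ} (Ls : Fin k → List (Set (Fin d) × Set (Fin d)))
    (i : Fin k) (s : ℕ → Fin d) :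
    (fun n => pr (s n) i) ∈ StreettAcc (liftedPairs Ls) ↔ s ∈ StreettAcc (Ls i) := by
  have hocc := occInf_pr i s
  constructor
  · intro h p hp
    rcases h _ (liftPair_mem hp) with h1 | h2
    · left
      intro c hc hcin
      exact h1 (pr c i) ⟨c, hc, rfl⟩ (by rw [hocc]; exact ⟨c, hcin, rfl⟩)
    · right
      obtain ⟨x, hxF, hxInf⟩ := h2
      rw [hocc] at hxInf
      obtain ⟨c, hcInf, rfl⟩ := hxInf
      rcases hxF with hne | ⟨c', hc', he⟩
      · exact absurd (pr_symm_snd c i) hne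
      · exact ⟨c, (pr_inj he).1 ▸ hc', hcInf⟩
  · intro h p' hp'
    obtain ⟨j, p, hpj, rfl⟩ := mem_liftedPairs hp'
    by_cases hij : j = i
    · subst hij
      rcases h p hpj with h1 | h2
      · left
        rintro x ⟨c, hc, rfl⟩ hxin
        rw [hocc] at hxin
        obtain ⟨c', hc', he⟩ := hxin
        exact h1 c hc ((pr_inj he).1 ▸ hc')
      · right
        obtain ⟨c, hc, hcin⟩ := h2
        exact ⟨pr c j, Or.inr ⟨c, hc, rfl⟩, by rw [hocc]; exact ⟨c, hcin, rfl⟩⟩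
    · right
      obtain ⟨c, hcin⟩ := occInf_nonempty s
      refine ⟨pr c i, Or.inl ?_, by rw [hocc]; exact ⟨c, hcin, rfl⟩⟩
      rw [Set.mem_setOf_eq, pr_symm_snd]
      exact fun he => hij he.symm

lemma lang_iUnion {Q P : Type} {d : ℕ} (A : HOA Q P d) {ι : Type*}
    (Acc : ι → Set (ℕ → Fin d)) :
    Lang A (⋃ i, Acc i) = ⋃ i, Lang A (Acc i) := by
  ext w
  simp only [Lang, Set.mem_setOf_eq, Set.mem_iUnion]
  constructor
  · rintro ⟨ρ, h1, h2, ⟨i, h3⟩, h4⟩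
    exact ⟨i, ρ, h1, h2, h3, h4⟩
  · rintro ⟨i, ρ, h1, h2, h3, h4⟩
    exact ⟨ρ, h1, h2, ⟨i, h3⟩, h4⟩

lemma lang_prod {P : Type} {n d k : ℕ} (A : HOA (Fin n) P d)
    (Ls : Fin k → List (Set (Fin d) × Set (Fin d))) :
    Lang (prodHOA A k) (StreettAcc (liftedPairs Ls)) =
      ⋃ i, Lang A (StreettAcc (Ls i)) := by
  ext w
  simp only [Set.mem_iUnion]
  constructor
  · rintro ⟨ρ', ⟨hΔ, hcons⟩, hinit, hacc, hsat⟩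
    have hdec : ∀ m, ∃ i t, t ∈ A.Δ ∧ ρ' m = liftE i t := by
      intro m
      have := hΔ m
      simp only [prodHOA, Set.mem_iUnion, Set.mem_image] at this
      obtain ⟨i, t, ht, he⟩ := this
      exact ⟨i, t, ht, he.symm⟩
    choose f t htmem hft using hdec
    have hstep : ∀ m, f (m + 1) = f m ∧ (t m).dst = (t (m + 1)).src := by
      intro m
      have h := hcons m
      rw [hft m, hft (m + 1)] at h
      simp only [liftE] at h
      exact ⟨(pr_inj h).2.symm, (pr_inj h).1⟩
    have hconst : ∀ m, f m = f 0 := by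
      intro m
      induction m with
      | zero => rfl
      | succ m ih => rw [(hstep m).1, ih]
    refine ⟨f 0, t, ⟨htmem, fun m => (hstep m).2⟩, ?_, ?_, ?_⟩
    · have h0 := hinit
      rw [hft 0] at h0
      simp only [prodHOA, liftE, Set.mem_iUnion, Set.mem_image] at h0
      obtain ⟨j, q, hq, he⟩ := h0
      exact (pr_inj he).1 ▸ hq
    · have hcs : colorSeq ρ' = fun m => pr (colorSeq t m) (f 0) := by
        funext m
        rw [show colorSeq ρ' m = (ρ' m).color from rfl, hft m]
        simp [liftE, colorSeq, hconst m]
      rw [hcs] at hacc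
      exact (streett_lift_iff Ls (f 0) (colorSeq t)).mp hacc
    · intro m
      have := hsat m
      rw [hft m] at this
      exact this
  · rintro ⟨i, ρ, ⟨hΔ, hcons⟩, hinit, hacc, hsat⟩
    refine ⟨fun m => liftE i (ρ m), ⟨?_, ?_⟩, ?_, ?_, ?_⟩
    · intro m
      simp only [prodHOA, Set.mem_iUnion, Set.mem_image]
      exact ⟨i, ρ m, hΔ m, rfl⟩
    · intro m
      simp [liftE, hcons m]
    · simp only [prodHOA, liftE, Set.mem_iUnion, Set.mem_image]
      exact ⟨i, (ρ 0).src, hinit, rfl⟩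
    · have hcs : colorSeq (fun m => liftE i (ρ m)) = fun m => pr (colorSeq ρ m) i := rfl
      rw [hcs]
      exact (streett_lift_iff Ls i (colorSeq ρ)).mpr hacc
    · exact hsat

/-- The Streett list equivalent (for existing sequences) to a single Rabin pair. -/
def rL {d : ℕ} (pairs : List (Set (Fin d) × Set (Fin d))) (i : Fin pairs.length) :
    List (Set (Fin d) × Set (Fin d)) :=
  [(Set.univ, (pairs.get i).1), ((pairs.get i).2, (∅ : Set (Fin d)))]

lemma rabin_eq {d : ℕ} (pairs : List (Set (Fin d) × Set (Fin d))) :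
    RabinAcc pairs = ⋃ i, StreettAcc (rL pairs i) := by
  ext s
  obtain ⟨c0, hc0⟩ := occInf_nonempty s
  simp only [RabinAcc, StreettAcc, Set.mem_setOf_eq, Set.mem_iUnion]
  constructor
  · rintro ⟨p, hp, ⟨c, hcE, hcInf⟩, hFin⟩
    obtain ⟨i, rfl⟩ := List.mem_iff_get.mp hp
    refine ⟨i, fun q hq => ?_⟩
    simp only [rL, List.mem_cons, List.not_mem_nil, or_false] at hq
    rcases hq with rfl | rfl
    · exact Or.inr ⟨c, hcE, hcInf⟩
    · exact Or.inl hFin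
  · rintro ⟨i, h⟩
    refine ⟨pairs.get i, List.mem_iff_get.mpr ⟨i, rfl⟩, ?_, ?_⟩
    · rcases h _ (show (Set.univ, (pairs.get i).1) ∈ rL pairs i by simp [rL]) with h1 | h2
      · exact absurd hc0 (h1 c0 (Set.mem_univ c0))
      · exact h2
    · rcases h _ (show ((pairs.get i).2, (∅ : Set (Fin d))) ∈ rL pairs i by simp [rL])
        with h1 | h2
      · exact h1
      · obtain ⟨c, hc, -⟩ := h2
        exact absurd hc (Set.notMem_empty c)

/-- The Streett list equivalent (for existing sequences) to a single Muller set. -/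
def mL {d : ℕ} (sets : List (Set (Fin d))) (i : Fin sets.length) :
    List (Set (Fin d) × Set (Fin d)) :=
  (List.finRange d).map fun c =>
    (if c ∈ sets.get i then (Set.univ : Set (Fin d)) else ∅, ({c} : Set (Fin d)))

lemma muller_eq {d : ℕ} (sets : List (Set (Fin d))) :
    MullerAcc sets = ⋃ i, StreettAcc (mL sets i) := by
  ext s
  obtain ⟨c0, hc0⟩ := occInf_nonempty s
  simp only [MullerAcc, StreettAcc, Set.mem_setOf_eq, Set.mem_iUnion]
  constructor
  · rintro ⟨E, hE, hall⟩
    obtain ⟨i, rfl⟩ := List.mem_iff_get.mp hE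
    refine ⟨i, fun q hq => ?_⟩
    simp only [mL, List.mem_map, List.mem_finRange, true_and] at hq
    obtain ⟨c, rfl⟩ := hq
    by_cases hc : c ∈ sets.get i
    · simp only [if_pos hc]
      exact Or.inr ⟨c, Set.mem_singleton c, hall c hc⟩
    · simp only [if_neg hc]
      exact Or.inl fun c' hc' _ => Set.notMem_empty c' hc'
  · rintro ⟨i, h⟩
    refine ⟨sets.get i, List.mem_iff_get.mpr ⟨i, rfl⟩, fun c hc => ?_⟩
    have hq : (if c ∈ sets.get i then (Set.univ : Set (Fin d)) else ∅, ({c} : Set (Fin d)))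
        ∈ mL sets i := by
      simp only [mL, List.mem_map, List.mem_finRange, true_and]
      exact ⟨c, rfl⟩
    rcases h _ hq with h1 | h2
    · rw [if_pos hc] at h1
      exact absurd hc0 (h1 c0 (Set.mem_univ c0))
    · obtain ⟨c', hc', hinf⟩ := h2
      exact Set.mem_singleton_iff.mp hc' ▸ hinf

lemma prod_fin {P : Type} {n d : ℕ} (A : HOA (Fin n) P d) (k : ℕ) (h : A.Δ.Finite) :
    (prodHOA A k).Δ.Finite :=
  Set.finite_iUnion fun i => h.image (liftE i)

lemma sum_guard_bound {P : Type} {n d : ℕ} (A : HOA (Fin n) P d) (k : ℕ)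
    (h : A.Δ.Finite) :
    ∑ t ∈ (prod_fin A k h).toFinset, t.guard.size ≤
      k * ∑ t ∈ h.toFinset, t.guard.size := by
  classical
  have hsub : (prod_fin A k h).toFinset ⊆
      Finset.univ.biUnion (fun i : Fin k => h.toFinset.image (liftE i)) := by
    intro t' ht'
    rw [Set.Finite.mem_toFinset] at ht'
    simp only [prodHOA, Set.mem_iUnion, Set.mem_image] at ht'
    obtain ⟨i, t, ht, rfl⟩ := ht'
    simp only [Finset.mem_biUnion, Finset.mem_univ, Finset.mem_image]
    exact ⟨i, trivial, t, h.mem_toFinset.mpr ht, rfl⟩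
  have hdisj : ((Finset.univ : Finset (Fin k)) : Set (Fin k)).PairwiseDisjoint
      (fun i => h.toFinset.image (liftE (P := P) (n := n) (d := d) i)) := by
    intro i _ j _ hij
    simp only [Function.onFun]
    rw [Finset.disjoint_left]
    rintro t' ht1 ht2
    simp only [Finset.mem_image] at ht1 ht2
    obtain ⟨a, -, rfl⟩ := ht1
    obtain ⟨b, -, hb⟩ := ht2
    have hcol : pr b.color j = pr a.color i := congrArg Edge.color hb
    exact hij ((pr_inj hcol).2).symm
  calc ∑ t ∈ (prod_fin A k h).toFinset, t.guard.size
      ≤ ∑ t ∈ Finset.univ.biUnion (fun i : Fin k => h.toFinset.image (liftE i)),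
          t.guard.size := Finset.sum_le_sum_of_subset hsub
    _ = ∑ i : Fin k, ∑ t' ∈ h.toFinset.image (liftE i), t'.guard.size :=
        Finset.sum_biUnion hdisj
    _ = ∑ i : Fin k, ∑ t ∈ h.toFinset, t.guard.size :=
        Finset.sum_congr rfl fun i _ =>
          Finset.sum_image fun a _ b _ hab => liftE_inj i hab
    _ = k * ∑ t ∈ h.toFinset, t.guard.size := by
        simp [Finset.sum_const, Finset.card_univ]

end Stmt10

end Stmt10Aux

lemma Stmt10.size_bound (n cP sA k d SB L : ℕ) (hd : 1 ≤ d)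
    (hB : SB ≤ k * sA) (hL : L ≤ 2 * k * d) :
    (n * k + cP + SB) + L * (d * k) + d * k ≤ 10 * ((n + cP + sA) + k * d + 1) ^ 3 := by
  set S := (n + cP + sA) + k * d + 1 with hS
  have hn : n ≤ S := by omega
  have hcP : cP ≤ S := by omega
  have hsA : sA ≤ S := by omega
  have hkd : k * d ≤ S := by omega
  have hk : k ≤ S := le_trans (Nat.le_mul_of_pos_right k hd) hkd
  have hS1 : 1 ≤ S := by omega
  have hdk : d * k ≤ S := by rw [Nat.mul_comm]; exact hkd
  have h1 : n * k ≤ S * S := Nat.mul_le_mul hn hk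
  have h2 : SB ≤ S * S := le_trans hB (Nat.mul_le_mul hk hsA)
  have h3 : L * (d * k) ≤ (2 * S) * S := by
    refine Nat.mul_le_mul (le_trans hL ?_) hdk
    calc 2 * k * d = 2 * (k * d) := by ring
      _ ≤ 2 * S := by omega
  have hSS : S * S ≤ S * (S * S) := Nat.le_mul_of_pos_left _ hS1
  have hSc : S ≤ S * (S * S) := by nlinarith
  have hcube : 10 * S ^ 3 = 10 * (S * (S * S)) := by ring
  have h2S : (2 * S) * S = 2 * (S * S) := by ring
  rw [hcube]
  rw [h2S] at h3
  omega

/-- there is a polynomial bound (`c`, exponent `k`) such that every Rabin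
HOA and every Muller HOA can be transformed into an equivalent Streett HOA whose total
size (automaton plus Streett acceptance condition) is polynomial in the size of the
original automaton together with its acceptance condition. -/
theorem stmt10 :
    ∃ c k : ℕ,
      (∀ (n : ℕ) (P : Type) [Fintype P] (d : ℕ) (A : HOA (Fin n) P d)
        (hfin : A.Δ.Finite) (pairs : List (Set (Fin d) × Set (Fin d))),
        ∃ (n' d' : ℕ) (B : HOA (Fin n') P d') (hfinB : B.Δ.Finite)
          (spairs : List (Set (Fin d') × Set (Fin d'))),
          hoaSize B hfinB + spairs.length * d' + d' ≤
            c * (hoaSize A hfin + pairs.length * d + 1) ^ k ∧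
          Lang A (RabinAcc pairs) = Lang B (StreettAcc spairs)) ∧
      (∀ (n : ℕ) (P : Type) [Fintype P] (d : ℕ) (A : HOA (Fin n) P d)
        (hfin : A.Δ.Finite) (sets : List (Set (Fin d))),
        ∃ (n' d' : ℕ) (B : HOA (Fin n') P d') (hfinB : B.Δ.Finite)
          (spairs : List (Set (Fin d') × Set (Fin d'))),
          hoaSize B hfinB + spairs.length * d' + d' ≤
            c * (hoaSize A hfin + sets.length * d + 1) ^ k ∧
          Lang A (MullerAcc sets) = Lang B (StreettAcc spairs)) := by

  classical
  refine ⟨10, 3, ?_, ?_⟩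
  · -- Rabin
    intro n P _ d A hfin pairs
    by_cases hd : d = 0
    · subst hd
      refine ⟨0, 0, ⟨∅, ∅⟩, Set.finite_empty, [], ?_, ?_⟩
      · have hP : Fintype.card P ≤ hoaSize A hfin := by
          simp only [hoaSize]
          omega
        have : hoaSize (⟨∅, ∅⟩ : HOA (Fin 0) P 0) Set.finite_empty = Fintype.card P := by
          simp [hoaSize]
        rw [this]
        calc Fintype.card P + [].length * 0 + 0
            ≤ hoaSize A hfin + pairs.length * 0 + 1 := by
              simpa using Nat.le_succ_of_le hP
          _ ≤ (hoaSize A hfin + pairs.length * 0 + 1) ^ 3 :=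
              Nat.le_self_pow (by norm_num) _
          _ ≤ 10 * (hoaSize A hfin + pairs.length * 0 + 1) ^ 3 := by omega
      · ext w
        simp only [Lang, Set.mem_setOf_eq]
        constructor
        · rintro ⟨ρ, -⟩
          exact ((ρ 0).color).elim0
        · rintro ⟨ρ, -⟩
          exact ((ρ 0).src).elim0
    · refine ⟨n * pairs.length, d * pairs.length, Stmt10.prodHOA A pairs.length,
        Stmt10.prod_fin A pairs.length hfin, Stmt10.liftedPairs (Stmt10.rL pairs), ?_, ?_⟩
      · -- size bound
        have e1 : hoaSize (Stmt10.prodHOA A pairs.length) (Stmt10.prod_fin A pairs.length hfin)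
            = n * pairs.length + Fintype.card P +
              ∑ t ∈ (Stmt10.prod_fin A pairs.length hfin).toFinset, t.guard.size := by
          simp [hoaSize]
        have e2 : hoaSize A hfin
            = n + Fintype.card P + ∑ t ∈ hfin.toFinset, t.guard.size := by
          simp [hoaSize]
        have hL : (Stmt10.liftedPairs (Stmt10.rL pairs)).length ≤ 2 * pairs.length * d := by
          rw [Stmt10.liftedPairs_length]
          have : ∑ i : Fin pairs.length, (Stmt10.rL pairs i).length = pairs.length * 2 := by
            simp [Stmt10.rL]
          rw [this]
          calc pairs.length * 2 = 2 * pairs.length * 1 := by ring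
            _ ≤ 2 * pairs.length * d :=
              Nat.mul_le_mul_left _ (Nat.one_le_iff_ne_zero.mpr hd)
        rw [e1, e2]
        exact Stmt10.size_bound n (Fintype.card P) _ pairs.length d _ _
          (Nat.one_le_iff_ne_zero.mpr hd) (Stmt10.sum_guard_bound A pairs.length hfin) hL
      · rw [Stmt10.rabin_eq pairs, Stmt10.lang_iUnion]
        exact (Stmt10.lang_prod A (Stmt10.rL pairs)).symm
  · -- Muller
    intro n P _ d A hfin sets
    by_cases hd : d = 0
    · subst hd
      refine ⟨0, 0, ⟨∅, ∅⟩, Set.finite_empty, [], ?_, ?_⟩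
      · have hP : Fintype.card P ≤ hoaSize A hfin := by
          simp only [hoaSize]
          omega
        have : hoaSize (⟨∅, ∅⟩ : HOA (Fin 0) P 0) Set.finite_empty = Fintype.card P := by
          simp [hoaSize]
        rw [this]
        calc Fintype.card P + [].length * 0 + 0
            ≤ hoaSize A hfin + sets.length * 0 + 1 := by
              simpa using Nat.le_succ_of_le hP
          _ ≤ (hoaSize A hfin + sets.length * 0 + 1) ^ 3 :=
              Nat.le_self_pow (by norm_num) _
          _ ≤ 10 * (hoaSize A hfin + sets.length * 0 + 1) ^ 3 := by omega
      · ext w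
        simp only [Lang, Set.mem_setOf_eq]
        constructor
        · rintro ⟨ρ, -⟩
          exact ((ρ 0).color).elim0
        · rintro ⟨ρ, -⟩
          exact ((ρ 0).src).elim0
    · refine ⟨n * sets.length, d * sets.length, Stmt10.prodHOA A sets.length,
        Stmt10.prod_fin A sets.length hfin, Stmt10.liftedPairs (Stmt10.mL sets), ?_, ?_⟩
      · have e1 : hoaSize (Stmt10.prodHOA A sets.length) (Stmt10.prod_fin A sets.length hfin)
            = n * sets.length + Fintype.card P +
              ∑ t ∈ (Stmt10.prod_fin A sets.length hfin).toFinset, t.guard.size := by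
          simp [hoaSize]
        have e2 : hoaSize A hfin
            = n + Fintype.card P + ∑ t ∈ hfin.toFinset, t.guard.size := by
          simp [hoaSize]
        have hL : (Stmt10.liftedPairs (Stmt10.mL sets)).length ≤ 2 * sets.length * d := by
          rw [Stmt10.liftedPairs_length]
          have : ∑ i : Fin sets.length, (Stmt10.mL sets i).length = sets.length * d := by
            simp [Stmt10.mL]
          rw [this]
          calc sets.length * d = 1 * sets.length * d := by ring
            _ ≤ 2 * sets.length * d := by
              exact Nat.mul_le_mul_right _ (Nat.mul_le_mul_right _ (by norm_num))
        rw [e1, e2]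
        exact Stmt10.size_bound n (Fintype.card P) _ sets.length d _ _
          (Nat.one_le_iff_ne_zero.mpr hd) (Stmt10.sum_guard_bound A sets.length hfin) hL
      · rw [Stmt10.muller_eq sets, Stmt10.lang_iUnion]
        exact (Stmt10.lang_prod A (Stmt10.mL sets)).symm
end

section
/- Let φ be a quantifier-free Boolean formula over disjoint variable tuples x̄ and ȳ, and let G_φ be the Hanoi omega-game over input propositions x̄ (controlled by Player In) and output propositions ȳ (controlled by Player Out) whose underlying automaton has states {q₀, q₁, q₂}, initial state q₀, transitions q₀ →^{φ | color 2} q₂, q₀ →^{¬φ | color 1} q₁, q₁ →^{True | color 1} q₁, q₂ →^{True | color 2} q₂, and the reachability winning condition R = {2} (color 2 must occur at least once). Then Player Out has a winning strategy in G_φ if and only if the quantified Boolean formula ∀x̄ ∃ȳ φ is true. -/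
/-- A round of a Hanoi omega-game: a valuation of the input propositions chosen by
Player In together with a valuation of the output propositions chosen by Player Out. -/
abbrev GRound (Pi Po : Type) := (Pi → Bool) × (Po → Bool)

/-- A strategy of Player In: from a history of rounds, choose an input valuation. -/
abbrev InStrat (Pi Po : Type) := List (GRound Pi Po) → (Pi → Bool)

/-- A strategy of Player Out: from a history of rounds and the input valuation just
chosen by Player In, choose an output valuation. -/
abbrev OutStrat (Pi Po : Type) := List (GRound Pi Po) → (Pi → Bool) → (Po → Bool)

/-- The history of the first `n` rounds of the play induced by a pair of strategies. -/
def gHist {Pi Po : Type} (σi : InStrat Pi Po) (σo : OutStrat Pi Po) :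
    ℕ → List (GRound Pi Po)
  | 0 => []
  | n + 1 =>
      gHist σi σo n ++
        [(σi (gHist σi σo n), σo (gHist σi σo n) (σi (gHist σi σo n)))]

/-- The `n`-th round of the play induced by a pair of strategies. -/
def gPlay {Pi Po : Type} (σi : InStrat Pi Po) (σo : OutStrat Pi Po) (n : ℕ) :
    GRound Pi Po :=
  (σi (gHist σi σo n), σo (gHist σi σo n) (σi (gHist σi σo n)))

/-- The ω-word over `Val(P_in ⊎ P_out)` obtained from the induced play. -/
def gWord {Pi Po : Type} (σi : InStrat Pi Po) (σo : OutStrat Pi Po) :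
    ℕ → (Pi ⊕ Po) → Bool :=
  fun n => Sum.elim (gPlay σi σo n).1 (gPlay σi σo n).2

/-- The automaton is complete and deterministic: from every state, every valuation
satisfies the guard of exactly one transition. -/
def CompleteDet {Q P : Type} {d : ℕ} (A : HOA Q P d) : Prop :=
  ∀ (q : Q) (v : P → Bool), ∃! t, t ∈ A.Δ ∧ t.src = q ∧ t.guard.sat v = true

/-- Player Out's strategy is winning: whatever Player In does, the resulting play
belongs to the language of the automaton. -/
def OutWinning {Q Pi Po : Type} {d : ℕ} (A : HOA Q (Pi ⊕ Po) d)
    (Acc : Set (ℕ → Fin d)) (σo : OutStrat Pi Po) : Prop :=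
  ∀ σi : InStrat Pi Po, gWord σi σo ∈ Lang A Acc

/-- Player In's strategy is winning: whatever Player Out does, the resulting play does
not belong to the language of the automaton. -/
def InWinning {Q Pi Po : Type} {d : ℕ} (A : HOA Q (Pi ⊕ Po) d)
    (Acc : Set (ℕ → Fin d)) (σi : InStrat Pi Po) : Prop :=
  ∀ σo : OutStrat Pi Po, gWord σi σo ∉ Lang A Acc

/-- The game automaton `G_φ`: states `q₀ = 0`, `q₁ = 1`, `q₂ = 2`, initial state `q₀`,
transitions `q₀ →^{φ | 2} q₂`, `q₀ →^{¬φ | 1} q₁`, `q₁ →^{True | 1} q₁`,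
`q₂ →^{True | 2} q₂`.  Colors: `(0 : Fin 2)` stands for color 1 and `(1 : Fin 2)` for
color 2. -/
def Gphi {Pi Po : Type} (φ : BForm (Pi ⊕ Po)) : HOA (Fin 3) (Pi ⊕ Po) 2 where
  I := {0}
  Δ := {⟨0, φ, 1, 2⟩, ⟨0, .not φ, 0, 1⟩, ⟨1, .tt, 0, 1⟩, ⟨2, .tt, 1, 2⟩}

/-- in the Hanoi omega-game on `G_φ` with the reachability winning
condition `R = {2}` (color 2 must occur at least once), Player Out has a winning
strategy iff `∀x̄ ∃ȳ φ` is true. -/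
theorem stmt15 {Pi Po : Type} (φ : BForm (Pi ⊕ Po)) :
    (∃ σo : OutStrat Pi Po, OutWinning (Gphi φ) {s : ℕ → Fin 2 | ∃ n, s n = 1} σo) ↔
      ∀ vi : Pi → Bool, ∃ vo : Po → Bool, φ.sat (Sum.elim vi vo) = true := by
  constructor
  · rintro ⟨σo, hwin⟩ vi
    refine ⟨σo [] vi, ?_⟩
    -- constant In strategy
    have h := hwin (fun _ => vi)
    obtain ⟨ρ, ⟨hΔ, hchain⟩, hinit, ⟨n, hn⟩, hsat⟩ := h
    have h0 := hΔ 0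
    have hw0 := hsat 0
    have hword0 : gWord (fun _ => vi) σo 0 = Sum.elim vi (σo [] vi) := by
      simp [gWord, gPlay, gHist]
    -- case on which edge ρ 0 is
    rcases h0 with h | h | h | h
    · -- φ edge: done
      rw [h] at hw0
      rwa [hword0] at hw0
    · -- ¬φ edge: show no color 1 ever, contradiction
      exfalso
      have hall : ∀ m, (ρ m).dst = 1 ∧ (ρ m).color = 0 := by
        intro m
        induction m with
        | zero => rw [h]; exact ⟨rfl, rfl⟩
        | succ k ih =>
          have hsrc : (ρ (k+1)).src = 1 := (hchain k).symm.trans ih.1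
          rcases hΔ (k+1) with h' | h' | h' | h' <;> rw [h'] at hsrc ⊢ <;>
            first | exact ⟨rfl, rfl⟩ | simp at hsrc
      rcases Nat.eq_zero_or_pos n with rfl | hpos
      · rw [show colorSeq ρ 0 = (ρ 0).color from rfl, h] at hn
        simp at hn
      · have := (hall n).2
        rw [show colorSeq ρ n = (ρ n).color from rfl, this] at hn
        simp at hn
    · rw [h] at hinit; simp [Gphi] at hinit
    · rw [h] at hinit; simp [Gphi] at hinit
  · intro hφ
    choose f hf using hφ
    refine ⟨fun _ vi => f vi, ?_⟩
    intro σi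
    refine ⟨fun n => if n = 0 then ⟨0, φ, 1, 2⟩ else ⟨2, .tt, 1, 2⟩, ⟨?_, ?_⟩, ?_, ⟨0, rfl⟩, ?_⟩
    · intro n
      rcases n with _ | n
      · exact Or.inl rfl
      · exact Or.inr (Or.inr (Or.inr rfl))
    · intro n
      rcases n with _ | n <;> rfl
    · exact rfl
    · intro n
      rcases n with _ | n
      · have : gWord σi (fun _ vi => f vi) 0 = Sum.elim (σi []) (f (σi [])) := by
          simp [gWord, gPlay, gHist]
        simp only [if_pos rfl]
        rw [this]
        exact hf (σi [])
      · rfl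
end

section
/- Let φ be a quantifier-free Boolean formula over disjoint variable tuples x̄ and ȳ, and let G_φ be the Hanoi omega-game over input propositions x̄ (controlled by Player In) and output propositions ȳ (controlled by Player Out) whose underlying automaton has states {q₀, q₁, q₂}, initial state q₀, transitions q₀ →^{φ | color 2} q₂, q₀ →^{¬φ | color 1} q₁, q₁ →^{True | color 1} q₁, q₂ →^{True | color 2} q₂, and the safety winning condition S = {2} (every color occurring in the play must belong to {2}). Then Player Out has a winning strategy in G_φ if and only if the quantified Boolean formula ∀x̄ ∃ȳ φ is true. -/
/-- in the Hanoi omega-game on `G_φ` with the safety winning condition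
`S = {2}` (every occurring color must be 2), Player Out has a winning strategy iff
`∀x̄ ∃ȳ φ` is true. -/
theorem stmt16 {Pi Po : Type} (φ : BForm (Pi ⊕ Po)) :
    (∃ σo : OutStrat Pi Po, OutWinning (Gphi φ) {s : ℕ → Fin 2 | ∀ n, s n = 1} σo) ↔
      ∀ vi : Pi → Bool, ∃ vo : Po → Bool, φ.sat (Sum.elim vi vo) = true := by
  constructor
  · rintro ⟨σo, hw⟩ vi
    refine ⟨σo [] vi, ?_⟩
    obtain ⟨ρ, ⟨hmem, _⟩, hinit, hcol, hsat⟩ := hw (fun _ => vi)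
    have hsrc : (ρ 0).src = 0 := hinit
    have hc : (ρ 0).color = 1 := hcol 0
    have heq : ρ 0 = ⟨0, φ, 1, 2⟩ := by
      have h0 := hmem 0
      simp only [Gphi, Set.mem_insert_iff, Set.mem_singleton_iff] at h0
      rcases h0 with h | h | h | h <;> rw [h] <;> rw [h] at hsrc hc <;> simp_all
    have := hsat 0
    rw [heq] at this
    exact this
  · intro h
    choose vo hvo using h
    refine ⟨fun _ vi => vo vi, fun σi => ?_⟩
    refine ⟨fun n => if n = 0 then ⟨0, φ, 1, 2⟩ else ⟨2, .tt, 1, 2⟩, ⟨?_, ?_⟩, ?_, ?_, ?_⟩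
    · intro n; cases n <;> simp [Gphi]
    · intro n; cases n <;> simp
    · simp [Gphi]
    · intro n; cases n <;> simp [colorSeq]
    · intro n
      cases n with
      | zero => simpa [gWord, gPlay, gHist] using hvo (σi [])
      | succ k => simp [WordSat, BForm.sat]
end
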